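/- arXiv:2204.07325 — 10 statements merged into one kernel-verified Lean document; each statement's English description precedes it below -/
import Mathlib

section
/- Let a₁,…,a_k be positive integers with gcd(a₁,…,a_k)=1. Then the Sylvester number n(a₁,…,a_k), i.e., the cardinality of NR(a₁,…,a_k), equals (1/a₁)·Σ_{i=1}^{a₁−1} m_i − (a₁−1)/2. -/
open Finset

/-- `n` is representable as a nonnegative integer combination of the `a i`. -/
def Representable {k : ℕ} (a : Fin k → ℕ) (n : ℕ) : Prop :=
  ∃ x : Fin k → ℕ, n = ∑ i, x i * a i

/-- The set of positive integers that are not representable. -/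
def NRset {k : ℕ} (a : Fin k → ℕ) : Set ℕ :=
  {n | 0 < n ∧ ¬ Representable a n}

/-!
Multiples of `a₀` are representable and adding `a₀` preserves representability, so in a residue
class `i ≢ 0 (mod a₀)` the non-representable numbers are exactly those below `mᵢ`; there are
`mᵢ / a₀` of them. Summing over `i` and writing `mᵢ = a₀ ⌊mᵢ / a₀⌋ + i` gives the formula.
-/

theorem card_filter_range_mod_eq {A M i : ℕ} (hA : 0 < A) (hM : M % A = i) :
    #{n ∈ range M | n % A = i} = M / A := by
  have hi : i % A = i := hM ▸ Nat.mod_mod M A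
  have := Nat.count_modEq_card M hA i
  rw [Nat.count_eq_card_filter_range, hi, hM, if_neg (lt_irrefl i)] at this
  simpa [Nat.ModEq, hi] using this

namespace Representable

variable {k : ℕ} {a : Fin k → ℕ}

theorem add_mul_apply {n : ℕ} (h : Representable a n) (c : ℕ) (j : Fin k) :
    Representable a (n + c * a j) := by
  obtain ⟨x, rfl⟩ := h
  refine ⟨x + Pi.single j c, ?_⟩
  simp [add_mul, sum_add_distrib, Pi.single_apply]

theorem of_mod_eq_zero {n : ℕ} {j : Fin k} (h : n % a j = 0) : Representable a n := by
  have h0 : Representable a 0 := ⟨0, by simp⟩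
  simpa [Nat.div_mul_cancel (Nat.dvd_of_mod_eq_zero h)] using h0.add_mul_apply (n / a j) j

theorem iff_le_of_isLeast {j : Fin k} {i M n : ℕ} (hi : 0 < i)
    (hM : IsLeast {n | 0 < n ∧ Representable a n ∧ n % a j = i} M) (hn : n % a j = i) :
    Representable a n ↔ M ≤ n := by
  refine ⟨fun h => hM.2 ⟨Nat.pos_of_ne_zero ?_, h, hn⟩, fun hle => ?_⟩
  · rintro rfl
    rw [Nat.zero_mod] at hn
    omega
  · obtain ⟨-, hMrep, hMmod⟩ := hM.1
    obtain ⟨c, hc⟩ : a j ∣ n - M := Nat.dvd_of_mod_eq_zero <|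
      Nat.sub_mod_eq_zero_of_mod_eq (hn.trans hMmod.symm)
    have hnM : n = M + c * a j := by rw [mul_comm, ← hc]; omega
    exact hnM ▸ hMrep.add_mul_apply c j

end Representable

section

variable {k : ℕ} {a : Fin k → ℕ} {j : Fin k} {m : ℕ → ℕ}

theorem mem_nrset_iff (hA : 0 < a j)
    (hm : ∀ i ∈ Icc 1 (a j - 1), IsLeast {n | 0 < n ∧ Representable a n ∧ n % a j = i} (m i))
    (n : ℕ) : n ∈ NRset a ↔ n % a j ∈ Icc 1 (a j - 1) ∧ n < m (n % a j) := by
  rcases Nat.eq_zero_or_pos (n % a j) with h0 | hpos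
  · simp [NRset, h0, Representable.of_mod_eq_zero h0]
  · have hmem : n % a j ∈ Icc 1 (a j - 1) := by
      have := Nat.mod_lt n hA
      simp only [mem_Icc]; omega
    have hn : 0 < n := Nat.pos_of_ne_zero (by rintro rfl; simp at hpos)
    simp [NRset, hmem, hn, Representable.iff_le_of_isLeast hpos (hm _ hmem) rfl]

theorem nrset_eq_biUnion (hA : 0 < a j)
    (hm : ∀ i ∈ Icc 1 (a j - 1), IsLeast {n | 0 < n ∧ Representable a n ∧ n % a j = i} (m i)) :
    NRset a = ↑((Icc 1 (a j - 1)).biUnion fun i => {n ∈ range (m i) | n % a j = i}) := by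
  ext n
  simp only [mem_nrset_iff hA hm, coe_biUnion, coe_filter, mem_range, Set.mem_iUnion,
    Set.mem_ofPred_eq, mem_coe]
  constructor
  · rintro ⟨hmem, hlt⟩
    exact ⟨_, hmem, hlt, rfl⟩
  · rintro ⟨i, hi, hlt, rfl⟩
    exact ⟨hi, hlt⟩

theorem ncard_nrset_eq_sum_div (hA : 0 < a j)
    (hm : ∀ i ∈ Icc 1 (a j - 1), IsLeast {n | 0 < n ∧ Representable a n ∧ n % a j = i} (m i)) :
    (NRset a).ncard = ∑ i ∈ Icc 1 (a j - 1), m i / a j := by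
  rw [nrset_eq_biUnion hA hm, Set.ncard_coe_finset, card_biUnion]
  · exact sum_congr rfl fun i hi => card_filter_range_mod_eq hA (hm i hi).1.2.2
  · intro i _ i' _ hii'
    simp only [disjoint_left, mem_filter]
    rintro n ⟨-, rfl⟩ ⟨-, rfl⟩
    exact hii' rfl

end

theorem sum_Icc_one_sub_one_cast (n : ℕ) :
    ∑ i ∈ Icc 1 (n - 1), (i : ℚ) = n * (n - 1) / 2 := by
  induction n with
  | zero => simp
  | succ n ih =>
    rcases n with _ | n
    · simp
    · simp only [Nat.add_sub_cancel] at ih ⊢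
      rw [sum_Icc_succ_top (by omega), ih]
      push_cast; ring

theorem sum_div_eq_of_mod_eq {A : ℕ} (hA : 0 < A) {m : ℕ → ℕ}
    (hm : ∀ i ∈ Icc 1 (A - 1), m i % A = i) :
    ((∑ i ∈ Icc 1 (A - 1), m i / A : ℕ) : ℚ) =
      1 / (A : ℚ) * ∑ i ∈ Icc 1 (A - 1), (m i : ℚ) - ((A : ℚ) - 1) / 2 := by
  have hdecomp : ∀ i ∈ Icc 1 (A - 1), (m i : ℚ) = A * (m i / A : ℕ) + i := fun i hi => by
    exact_mod_cast (hm i hi ▸ Nat.div_add_mod (m i) A).symm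
  rw [sum_congr rfl hdecomp, sum_add_distrib, ← mul_sum, sum_Icc_one_sub_one_cast]
  push_cast
  field_simp
  ring

theorem stmt1_general {k : ℕ} (a : Fin (k + 1) → ℕ)
    (ha : ∀ i, 0 < a i)
    (m : ℕ → ℕ)
    (hm : ∀ i ∈ Finset.Icc 1 (a 0 - 1),
      IsLeast {n : ℕ | 0 < n ∧ Representable a n ∧ n % (a 0) = i} (m i)) :
    ((NRset a).ncard : ℚ) =
      (1 / (a 0 : ℚ)) * ∑ i ∈ Finset.Icc 1 (a 0 - 1), (m i : ℚ)
        - ((a 0 : ℚ) - 1) / 2 := by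
  rw [ncard_nrset_eq_sum_div (ha 0) hm]
  exact sum_div_eq_of_mod_eq (ha 0) fun i hi => (hm i hi).1.2.2

/-- The Sylvester number `n(a₁,…,a_k)` equals `(1/a₁)·Σ m_i − (a₁−1)/2`. -/
theorem stmt1 {k : ℕ} (a : Fin (k + 1) → ℕ)
    (ha : ∀ i, 0 < a i)
    (hgcd : Finset.univ.gcd a = 1)
    (m : ℕ → ℕ)
    (hm : ∀ i ∈ Finset.Icc 1 (a 0 - 1),
      IsLeast {n : ℕ | 0 < n ∧ Representable a n ∧ n % (a 0) = i} (m i)) :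
    ((NRset a).ncard : ℚ) =
      (1 / (a 0 : ℚ)) * ∑ i ∈ Finset.Icc 1 (a 0 - 1), (m i : ℚ)
        - ((a 0 : ℚ) - 1) / 2 :=
  stmt1_general a ha m hm
end

section
/- Let a₁,…,a_k be positive integers with gcd(a₁,…,a_k)=1. Then the Sylvester sum s(a₁,…,a_k) = Σ_{n∈NR(a₁,…,a_k)} n equals (1/(2a₁))·Σ_{i=1}^{a₁−1} m_i² − (1/2)·Σ_{i=1}^{a₁−1} m_i + (a₁²−1)/12. -/
open Finset

/-!
A positive integer `n` with `n ≢ 0 (mod a₁)` is representable iff `n ≥ m_i`, where `i = n mod a₁`: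
adding multiples of `a₁` to `m_i` reaches every larger `n` in its class. So `NR` is the disjoint
union over `1 ≤ i < a₁` of the arithmetic progressions `i, i + a₁, …, m_i - a₁`, and summing
these progressions gives `(m_i² - i²)/(2a₁) - (m_i - i)/2` each; the terms in `i` alone add up to
`(a₁² - 1)/12`.
-/

section Representable

variable {k : ℕ} {a : Fin k → ℕ}

theorem representable_mul_apply (j : Fin k) (c : ℕ) :
    Representable a (c * a j) :=
  ⟨Pi.single j c, by simp [Pi.single_apply, ite_mul]⟩

theorem Representable.add {n n' : ℕ} (h : Representable a n) (h' : Representable a n') :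
    Representable a (n + n') := by
  obtain ⟨x, rfl⟩ := h
  obtain ⟨y, rfl⟩ := h'
  exact ⟨x + y, by simp [add_mul, sum_add_distrib]⟩

theorem Representable.of_le_of_modEq {n n' : ℕ} (h : Representable a n) (j : Fin k)
    (hle : n ≤ n') (hmod : n' ≡ n [MOD a j]) : Representable a n' := by
  obtain ⟨c, hc⟩ := (Nat.modEq_iff_dvd' hle).mp hmod.symm
  rw [← Nat.add_sub_cancel' hle, hc, mul_comm]
  exact h.add (representable_mul_apply j c)

end Representable

section ProgressionSums

theorem sum_Icc_one_natCast (b : ℕ) : ∑ i ∈ Icc 1 b, (i : ℚ) = b * (b + 1) / 2 := by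
  induction b with
  | zero => simp
  | succ b ih => rw [sum_Icc_succ_top (by omega), ih]; push_cast; ring

theorem sum_Icc_one_natCast_sq (b : ℕ) :
    ∑ i ∈ Icc 1 b, (i : ℚ) ^ 2 = b * (b + 1) * (2 * b + 1) / 6 := by
  induction b with
  | zero => simp
  | succ b ih => rw [sum_Icc_succ_top (by omega), ih]; push_cast; ring

theorem sum_Icc_residue_correction {d : ℕ} (hd : 0 < d) :
    ∑ i ∈ Icc 1 (d - 1), ((i : ℚ) / 2 - (i : ℚ) ^ 2 / (2 * d)) = ((d : ℚ) ^ 2 - 1) / 12 := by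
  obtain ⟨b, rfl⟩ := Nat.exists_eq_add_one_of_ne_zero hd.ne'
  rw [Nat.add_sub_cancel, sum_sub_distrib, ← sum_div, ← sum_div, sum_Icc_one_natCast,
    sum_Icc_one_natCast_sq]
  push_cast
  field_simp
  ring

theorem sum_range_mul_add_natCast {d : ℕ} (hd : 0 < d) (i t : ℕ) :
    ∑ j ∈ range t, ((d * j + i : ℕ) : ℚ)
      = (((d * t + i : ℕ) : ℚ) ^ 2 - (i : ℚ) ^ 2) / (2 * d) - (d * t : ℚ) / 2 := by
  have hd' : (d : ℚ) ≠ 0 := by exact_mod_cast hd.ne'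
  induction t with
  | zero => simp
  | succ t ih => rw [sum_range_succ, ih]; push_cast; field_simp; ring

theorem filter_range_mod_eq_image {d i : ℕ} (hi : i < d) (t : ℕ) :
    (range (d * t + i)).filter (· % d = i) = (range t).image (fun j => d * j + i) := by
  ext n
  simp only [mem_filter, mem_range, mem_image]
  constructor
  · rintro ⟨hlt, hmod⟩
    have hn : d * (n / d) + i = n := hmod ▸ Nat.div_add_mod n d
    exact ⟨n / d, Nat.lt_of_mul_lt_mul_left (a := d) (by omega), hn⟩
  · rintro ⟨j, hj, rfl⟩
    exact ⟨by nlinarith, by rw [Nat.mul_add_mod, Nat.mod_eq_of_lt hi]⟩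

theorem pairwiseDisjoint_filter_mod_eq (s : Set ℕ) (f : ℕ → Finset ℕ) (d : ℕ) :
    s.PairwiseDisjoint fun i => (f i).filter (· % d = i) :=
  fun _ _ _ _ hij => disjoint_left.2 fun _ hi hj =>
    hij ((mem_filter.1 hi).2.symm.trans (mem_filter.1 hj).2)

theorem sum_filter_range_mod_eq {d M i : ℕ} (hd : 0 < d) (hM : M % d = i) :
    ∑ n ∈ (range M).filter (· % d = i), (n : ℚ)
      = ((M : ℚ) ^ 2 - (i : ℚ) ^ 2) / (2 * d) - ((M : ℚ) - i) / 2 := by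
  have hM' : d * (M / d) + i = M := hM ▸ Nat.div_add_mod M d
  have hi : i < d := hM ▸ Nat.mod_lt M hd
  rw [← hM', filter_range_mod_eq_image hi, sum_image fun x _ y _ h =>
    Nat.eq_of_mul_eq_mul_left hd (by omega), sum_range_mul_add_natCast hd]
  push_cast
  ring

end ProgressionSums

section NonRepresentable

variable {k : ℕ} {a : Fin (k + 1) → ℕ} {m : ℕ → ℕ} (ha0 : 0 < a 0)
  (hm : ∀ i ∈ Icc 1 (a 0 - 1),
    IsLeast {n : ℕ | 0 < n ∧ Representable a n ∧ n % (a 0) = i} (m i))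
include ha0 hm

theorem mem_NRset_iff {n : ℕ} : n ∈ NRset a ↔ n % a 0 ≠ 0 ∧ n < m (n % a 0) := by
  have hi : n % a 0 < a 0 := Nat.mod_lt n ha0
  constructor
  · rintro ⟨-, hnrep⟩
    have hi0 : n % a 0 ≠ 0 := fun h => hnrep <| by
      rw [← Nat.div_mul_cancel (Nat.dvd_of_mod_eq_zero h)]
      exact representable_mul_apply 0 _
    refine ⟨hi0, lt_of_not_ge fun hle => hnrep ?_⟩
    obtain ⟨⟨-, hrep, hmod⟩, -⟩ := hm (n % a 0) (mem_Icc.2 ⟨by omega, by omega⟩)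
    exact hrep.of_le_of_modEq 0 hle hmod.symm
  · rintro ⟨hi0, hlt⟩
    have hn : 0 < n := Nat.pos_of_ne_zero fun h => hi0 (by simp [h])
    exact ⟨hn, fun hrep =>
      ((hm _ (mem_Icc.2 ⟨by omega, by omega⟩)).2 ⟨hn, hrep, rfl⟩).not_gt hlt⟩

theorem NRset_eq_biUnion :
    NRset a = ↑((Icc 1 (a 0 - 1)).biUnion fun i => (range (m i)).filter (· % a 0 = i)) := by
  ext n
  simp only [mem_NRset_iff ha0 hm, coe_biUnion, Set.mem_iUnion, mem_coe,
    mem_Icc, mem_filter, mem_range]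
  have hi : n % a 0 < a 0 := Nat.mod_lt n ha0
  constructor
  · rintro ⟨hi0, hlt⟩
    exact ⟨_, ⟨by omega, by omega⟩, hlt, rfl⟩
  · rintro ⟨i, ⟨hi1, -⟩, hlt, rfl⟩
    exact ⟨by omega, hlt⟩

end NonRepresentable

theorem stmt2_general {k : ℕ} (a : Fin (k + 1) → ℕ)
    (ha : ∀ i, 0 < a i)
    (m : ℕ → ℕ)
    (hm : ∀ i ∈ Finset.Icc 1 (a 0 - 1),
      IsLeast {n : ℕ | 0 < n ∧ Representable a n ∧ n % (a 0) = i} (m i)) :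
    ∑ᶠ n ∈ NRset a, (n : ℚ) =
      (1 / (2 * (a 0 : ℚ))) * ∑ i ∈ Finset.Icc 1 (a 0 - 1), (m i : ℚ) ^ 2
        - (1 / 2) * ∑ i ∈ Finset.Icc 1 (a 0 - 1), (m i : ℚ)
        + ((a 0 : ℚ) ^ 2 - 1) / 12 := by
  have ha0 : 0 < a 0 := ha 0
  rw [NRset_eq_biUnion ha0 hm, finsum_mem_coe_finset,
    sum_biUnion (pairwiseDisjoint_filter_mod_eq _ _ _),
    sum_congr rfl fun i hi => sum_filter_range_mod_eq ha0 (hm i hi).1.2.2,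
    ← sum_Icc_residue_correction ha0, mul_sum, mul_sum, ← sum_sub_distrib, ← sum_add_distrib]
  exact sum_congr rfl fun i _ => by ring

/-- The Sylvester sum `s(a₁,…,a_k)` equals
`(1/(2a₁))·Σ m_i² − (1/2)·Σ m_i + (a₁²−1)/12`. -/
theorem stmt2 {k : ℕ} (a : Fin (k + 1) → ℕ)
    (ha : ∀ i, 0 < a i)
    (hgcd : Finset.univ.gcd a = 1)
    (m : ℕ → ℕ)
    (hm : ∀ i ∈ Finset.Icc 1 (a 0 - 1),
      IsLeast {n : ℕ | 0 < n ∧ Representable a n ∧ n % (a 0) = i} (m i)) :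
    ∑ᶠ n ∈ NRset a, (n : ℚ) =
      (1 / (2 * (a 0 : ℚ))) * ∑ i ∈ Finset.Icc 1 (a 0 - 1), (m i : ℚ) ^ 2
        - (1 / 2) * ∑ i ∈ Finset.Icc 1 (a 0 - 1), (m i : ℚ)
        + ((a 0 : ℚ) ^ 2 - 1) / 12 :=
  stmt2_general a ha m hm
end

section
/- Let a₁,…,a_k be positive integers with gcd(a₁,…,a_k)=1 and let μ ≥ 0 be an integer. Then s_μ(a₁,…,a_k) = (1/(μ+1))·Σ_{κ=0}^{μ} C(μ+1,κ) B_κ a₁^{κ−1} Σ_{i=1}^{a₁−1} m_i^{μ+1−κ} + (B_{μ+1}/(μ+1))·(a₁^{μ+1}−1). -/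
open Finset

/-! Modulo `a₁`, the non-representable integers in a residue class `i ≠ 0` are exactly
`i, i + a₁, …, mᵢ - a₁`, so `s_μ` is a sum of power sums over arithmetic progressions. Each of
these telescopes into `a₁^μ (B_{μ+1}(mᵢ/a₁) - B_{μ+1}(i/a₁)) / (μ + 1)`: the values at `mᵢ/a₁` are
expanded binomially, and the values at `i/a₁` are summed by Raabe's multiplication formula
`Σ_{i<a} B_n(i/a) = a^{1-n} B_n`. -/

theorem Polynomial.sum_range_add_mul_pow_eq_bernoulli_sub (p q : ℕ) {A : ℚ} (hA : A ≠ 0) (x : ℚ) :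
    ((p : ℚ) + 1) * ∑ s ∈ range q, (x + A * s) ^ p =
      A ^ p * ((Polynomial.bernoulli (p + 1)).eval ((x + A * q) / A) -
        (Polynomial.bernoulli (p + 1)).eval (x / A)) := by
  induction q with
  | zero => simp
  | succ q ih =>
    have hshift : (x + A * (q + 1 : ℕ)) / A = 1 + (x + A * q) / A := by
      push_cast; field_simp; ring
    rw [sum_range_succ, mul_add, ih, hshift, Polynomial.bernoulli_eval_one_add, div_pow]
    push_cast
    field_simp
    ring

theorem Polynomial.pow_mul_bernoulli_eval_div (n : ℕ) {A : ℚ} (hA : A ≠ 0) (x : ℚ) :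
    A ^ n * (Polynomial.bernoulli (n + 1)).eval (x / A) =
      ∑ κ ∈ range (n + 2),
        ((n + 1).choose κ : ℚ) * _root_.bernoulli κ * A ^ ((κ : ℤ) - 1) * x ^ (n + 1 - κ) := by
  rw [Polynomial.bernoulli, Polynomial.eval_finsetSum, mul_sum]
  refine sum_congr rfl fun κ hκ => ?_
  have hκ : κ ≤ n + 1 := Nat.lt_succ_iff.mp (mem_range.mp hκ)
  rw [Polynomial.eval_monomial, div_pow,
    show (κ : ℤ) - 1 = n - ((n + 1 - κ : ℕ) : ℤ) by omega, zpow_sub₀ hA, zpow_natCast, zpow_natCast]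
  field_simp

open PowerSeries in
theorem Polynomial.pow_mul_sum_bernoulli_eval_div (n : ℕ) {a : ℕ} (ha : 0 < a) :
    (a : ℚ) ^ n * ∑ i ∈ range a, (Polynomial.bernoulli n).eval ((i : ℚ) / a) =
      a * _root_.bernoulli n := by
  have ha0 : (a : ℚ) ≠ 0 := by positivity
  set r := rescale ((a : ℚ)⁻¹) (exp ℚ)
  have hr_pow (i : ℕ) : r ^ i = rescale ((i : ℚ) / a) (exp ℚ) := by
    rw [← map_pow, exp_pow_eq_rescale_exp, rescale_rescale, div_eq_mul_inv]
  have hgeom : (∑ i ∈ range a, r ^ i) * (r - 1) = exp ℚ - 1 := by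
    rw [geom_sum_mul, hr_pow, div_self ha0, rescale_one, RingHom.id_apply]
  -- `S` and `T` are the exponential generating functions of the two sides, and both satisfy
  -- `· * (eˣ - 1) = X * Σ_{i<a} e^{iX/a}`.
  set S := ∑ i ∈ range a,
    mk fun p => Polynomial.aeval ((i : ℚ) / a) ((1 / (p.factorial : ℚ)) • Polynomial.bernoulli p)
  set T := (a : ℚ) • rescale (a : ℚ)⁻¹ (bernoulliPowerSeries ℚ)
  have hS : S * (exp ℚ - 1) = PowerSeries.X * ∑ i ∈ range a, r ^ i := by
    simp only [S, sum_mul, Polynomial.bernoulli_generating_function, mul_sum, hr_pow]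
  have hT : T * (r - 1) = PowerSeries.X := by
    rw [smul_mul_assoc, ← map_one (rescale (a : ℚ)⁻¹), ← map_sub, ← map_mul,
      bernoulliPowerSeries_mul_exp_sub_one, rescale_X, PowerSeries.smul_eq_C_mul, ← mul_assoc,
      ← map_mul, mul_inv_cancel₀ ha0, map_one, one_mul]
  have hexp : exp ℚ - 1 ≠ 0 :=
    right_ne_zero_of_mul (bernoulliPowerSeries_mul_exp_sub_one ℚ ▸ PowerSeries.X_ne_zero)
  have hST : S = T := mul_right_cancel₀ hexp <| by rw [hS, ← hgeom, ← hT]; ring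
  have hcoeff := congrArg (PowerSeries.coeff n) hST
  simp only [S, T, map_sum, coeff_mk, map_smul, coeff_rescale, bernoulliPowerSeries, smul_eq_mul,
    Polynomial.coe_aeval_eq_eval, Algebra.algebraMap_self, RingHom.id_apply, ← mul_sum] at hcoeff
  field_simp at hcoeff
  rw [hcoeff, one_div_pow]
  field_simp

theorem sum_pow_mul_bernoulli_eval_div {ι : Type*} (s : Finset ι) (M : ι → ℚ) (μ : ℕ) {A : ℚ}
    (hA : A ≠ 0) :
    ∑ i ∈ s, A ^ μ * (Polynomial.bernoulli (μ + 1)).eval (M i / A) =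
      ∑ κ ∈ range (μ + 1), ((μ + 1).choose κ : ℚ) * bernoulli κ * A ^ ((κ : ℤ) - 1) *
          ∑ i ∈ s, M i ^ (μ + 1 - κ) + #s * bernoulli (μ + 1) * A ^ μ := by
  simp_rw [Polynomial.pow_mul_bernoulli_eval_div μ hA]
  rw [sum_comm, sum_range_succ]
  simp [mul_sum, mul_assoc]

theorem pow_mul_sum_Icc_bernoulli_eval_div (μ : ℕ) {A : ℕ} (hA : 0 < A) :
    (A : ℚ) ^ μ * ∑ i ∈ Icc 1 (A - 1), (Polynomial.bernoulli (μ + 1)).eval ((i : ℚ) / A) =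
      (1 - A ^ μ) * bernoulli (μ + 1) := by
  have hmul := Polynomial.pow_mul_sum_bernoulli_eval_div (μ + 1) hA
  rw [sum_range_eq_add_Ico _ hA, ← Icc_sub_one_right_eq_Ico_of_not_isMin (by simp; omega)] at hmul
  rw [Nat.cast_zero, zero_div, Polynomial.bernoulli_eval_zero] at hmul
  refine mul_left_cancel₀ (Nat.cast_ne_zero.mpr hA.ne' : (A : ℚ) ≠ 0) ?_
  linear_combination hmul

namespace Representable

variable {k : ℕ} {a : Fin k → ℕ}

theorem add_s3 {n n' : ℕ} (h : Representable a n) (h' : Representable a n') :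
    Representable a (n + n') := by
  obtain ⟨x, rfl⟩ := h
  obtain ⟨y, rfl⟩ := h'
  exact ⟨x + y, by simp only [Pi.add_apply, add_mul, sum_add_distrib]⟩

theorem mul_apply (a : Fin k → ℕ) (t : ℕ) (j : Fin k) : Representable a (t * a j) :=
  ⟨Pi.single j t, by simp [Pi.single_apply]⟩

end Representable

theorem Nat.lt_iff_div_lt_div_of_mod_eq {x y A : ℕ} (hA : 0 < A) (h : x % A = y % A) :
    x < y ↔ x / A < y / A := by
  conv_lhs => rw [← Nat.mod_add_div' x A, ← Nat.mod_add_div' y A, h]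
  rw [Nat.add_lt_add_iff_left, Nat.mul_lt_mul_right hA]

section NRset

variable {k : ℕ} {a : Fin k → ℕ} {j : Fin k}

theorem representable_iff_le {i M n : ℕ}
    (hM : IsLeast {n | 0 < n ∧ Representable a n ∧ n % a j = i} M) (hn : 0 < n)
    (hni : n % a j = i) : Representable a n ↔ M ≤ n := by
  refine ⟨fun hrep => hM.2 ⟨hn, hrep, hni⟩, fun hle => ?_⟩
  obtain ⟨-, hMrep, hMi⟩ := hM.1
  have hdvd : a j ∣ n - M :=
    Nat.dvd_of_mod_eq_zero (Nat.sub_mod_eq_zero_of_mod_eq (hni.trans hMi.symm))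
  have hn_eq : n = M + (n - M) / a j * a j := by rw [Nat.div_mul_cancel hdvd]; omega
  rw [hn_eq]
  exact hMrep.add_s3 (.mul_apply a _ j)

theorem NRset_eq_image {m : ℕ → ℕ} (hj : 0 < a j)
    (hm : ∀ i ∈ Icc 1 (a j - 1), IsLeast {n | 0 < n ∧ Representable a n ∧ n % a j = i} (m i)) :
    NRset a = (fun p : (_ : ℕ) × ℕ => p.1 + a j * p.2) ''
      ↑((Icc 1 (a j - 1)).sigma fun i => range (m i / a j)) := by
  ext n
  simp only [NRset, Set.mem_ofPred_eq, Set.mem_image, mem_coe, mem_sigma, mem_Icc, mem_range]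
  constructor
  · rintro ⟨hn, hnrep⟩
    have hi : n % a j ∈ Icc 1 (a j - 1) := by
      have hne : n % a j ≠ 0 := fun h0 =>
        hnrep (Nat.div_mul_cancel (Nat.dvd_of_mod_eq_zero h0) ▸ .mul_apply a _ j)
      have := Nat.mod_lt n hj
      rw [mem_Icc]
      omega
    have hmi := hm _ hi
    have hlt : n < m (n % a j) :=
      not_le.mp fun hle => hnrep ((representable_iff_le hmi hn rfl).2 hle)
    exact ⟨⟨n % a j, n / a j⟩, ⟨mem_Icc.mp hi,
      (Nat.lt_iff_div_lt_div_of_mod_eq hj hmi.1.2.2.symm).mp hlt⟩, Nat.mod_add_div n (a j)⟩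
  · rintro ⟨⟨i, s⟩, ⟨hi, hs⟩, rfl⟩
    dsimp only at hi hs ⊢
    obtain ⟨hdiv, hmod⟩ := (Nat.div_mod_unique hj).2 ⟨rfl, (by omega : i < a j)⟩
    have hpos : 0 < i + a j * s := by omega
    refine ⟨hpos, fun hrep => ?_⟩
    have hle := (representable_iff_le (hm i (mem_Icc.mpr hi)) hpos hmod).1 hrep
    have := Nat.div_le_div_right (c := a j) hle
    omega

theorem finsum_mem_NRset_eq {M : Type*} [AddCommMonoid M] (f : ℕ → M) {m : ℕ → ℕ} (hj : 0 < a j)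
    (hm : ∀ i ∈ Icc 1 (a j - 1), IsLeast {n | 0 < n ∧ Representable a n ∧ n % a j = i} (m i)) :
    ∑ᶠ n ∈ NRset a, f n = ∑ i ∈ Icc 1 (a j - 1), ∑ s ∈ range (m i / a j), f (i + a j * s) := by
  rw [NRset_eq_image hj hm, finsum_mem_image, finsum_mem_coe_finset, sum_sigma]
  rintro ⟨i, s⟩ hp ⟨i', s'⟩ hp' h
  simp only [mem_coe, mem_sigma, mem_Icc] at hp hp'
  obtain ⟨hs, hi⟩ := (Nat.div_mod_unique hj).2 ⟨h.symm, (by omega : i' < a j)⟩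
  obtain ⟨hs', hi'⟩ := (Nat.div_mod_unique hj).2 ⟨rfl, (by omega : i < a j)⟩
  obtain rfl : s = s' := hs'.symm.trans hs
  obtain rfl : i = i' := hi'.symm.trans hi
  rfl

end NRset

theorem sum_Icc_sum_range_pow {A : ℕ} (hA : 0 < A) {m : ℕ → ℕ}
    (hm : ∀ i ∈ Icc 1 (A - 1), m i % A = i) (μ : ℕ) :
    ∑ i ∈ Icc 1 (A - 1), ∑ s ∈ range (m i / A), ((i : ℚ) + A * s) ^ μ =
      (1 / ((μ : ℚ) + 1)) * ∑ κ ∈ range (μ + 1),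
          ((μ + 1).choose κ : ℚ) * bernoulli κ * (A : ℚ) ^ ((κ : ℤ) - 1) *
            ∑ i ∈ Icc 1 (A - 1), (m i : ℚ) ^ (μ + 1 - κ)
        + bernoulli (μ + 1) / ((μ : ℚ) + 1) * ((A : ℚ) ^ (μ + 1) - 1) := by
  have hA0 : (A : ℚ) ≠ 0 := by positivity
  have hμ : (μ : ℚ) + 1 ≠ 0 := by positivity
  have hclass : ∀ i ∈ Icc 1 (A - 1),
      ((μ : ℚ) + 1) * ∑ s ∈ range (m i / A), ((i : ℚ) + A * s) ^ μ =
        A ^ μ * (Polynomial.bernoulli (μ + 1)).eval ((m i : ℚ) / A) -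
          A ^ μ * (Polynomial.bernoulli (μ + 1)).eval ((i : ℚ) / A) := by
    intro i hi
    have hmi : (m i : ℚ) = i + A * (m i / A : ℕ) := by
      exact_mod_cast (hm i hi ▸ Nat.mod_add_div (m i) A).symm
    rw [hmi, ← mul_sub, Polynomial.sum_range_add_mul_pow_eq_bernoulli_sub _ _ hA0]
  rw [← mul_right_inj' hμ, mul_sum, sum_congr rfl hclass, sum_sub_distrib,
    sum_pow_mul_bernoulli_eval_div _ _ _ hA0, ← mul_sum, pow_mul_sum_Icc_bernoulli_eval_div μ hA,
    Nat.card_Icc, Nat.add_sub_cancel, Nat.cast_pred hA]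
  field_simp
  ring

theorem stmt3_general {k : ℕ} (a : Fin (k + 1) → ℕ)
    (ha : ∀ i, 0 < a i)
    (m : ℕ → ℕ)
    (hm : ∀ i ∈ Finset.Icc 1 (a 0 - 1),
      IsLeast {n : ℕ | 0 < n ∧ Representable a n ∧ n % (a 0) = i} (m i))
    (μ : ℕ) :
    ∑ᶠ n ∈ NRset a, (n : ℚ) ^ μ =
      (1 / ((μ : ℚ) + 1)) * ∑ κ ∈ Finset.range (μ + 1),
          ((μ + 1).choose κ : ℚ) * bernoulli κ * (a 0 : ℚ) ^ ((κ : ℤ) - 1) *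
            ∑ i ∈ Finset.Icc 1 (a 0 - 1), (m i : ℚ) ^ (μ + 1 - κ)
        + bernoulli (μ + 1) / ((μ : ℚ) + 1) * ((a 0 : ℚ) ^ (μ + 1) - 1) := by
  rw [finsum_mem_NRset_eq (fun n : ℕ => (n : ℚ) ^ μ) (ha 0) hm]
  push_cast
  exact sum_Icc_sum_range_pow (ha 0) (fun i hi => (hm i hi).1.2.2) μ

/-- Sylvester power sum:
`s_μ = (1/(μ+1))·Σ_{κ=0}^{μ} C(μ+1,κ) B_κ a₁^{κ−1} Σ_{i=1}^{a₁−1} m_i^{μ+1−κ}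
      + (B_{μ+1}/(μ+1))·(a₁^{μ+1}−1)`. -/
theorem stmt3 {k : ℕ} (a : Fin (k + 1) → ℕ)
    (ha : ∀ i, 0 < a i)
    (hgcd : Finset.univ.gcd a = 1)
    (m : ℕ → ℕ)
    (hm : ∀ i ∈ Finset.Icc 1 (a 0 - 1),
      IsLeast {n : ℕ | 0 < n ∧ Representable a n ∧ n % (a 0) = i} (m i))
    (μ : ℕ) :
    ∑ᶠ n ∈ NRset a, (n : ℚ) ^ μ =
      (1 / ((μ : ℚ) + 1)) * ∑ κ ∈ Finset.range (μ + 1),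
          ((μ + 1).choose κ : ℚ) * bernoulli κ * (a 0 : ℚ) ^ ((κ : ℤ) - 1) *
            ∑ i ∈ Finset.Icc 1 (a 0 - 1), (m i : ℚ) ^ (μ + 1 - κ)
        + bernoulli (μ + 1) / ((μ : ℚ) + 1) * ((a 0 : ℚ) ^ (μ + 1) - 1) :=
  stmt3_general a ha m hm μ
end

section
/- Let a₁,…,a_k be positive integers with gcd(a₁,…,a_k)=1. Then s₂(a₁,…,a_k) = (1/(3a₁))·Σ_{i=1}^{a₁−1} m_i³ − (1/2)·Σ_{i=1}^{a₁−1} m_i² + (a₁/6)·Σ_{i=1}^{a₁−1} m_i. -/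
open Finset

lemma rep_zero {k : ℕ} (a : Fin (k + 1) → ℕ) : Representable a 0 :=
  ⟨0, by simp⟩

lemma rep_add_mul {k : ℕ} (a : Fin (k + 1) → ℕ) {n : ℕ} (h : Representable a n) (t : ℕ) :
    Representable a (n + t * a 0) := by
  obtain ⟨x, hx⟩ := h
  refine ⟨fun i => x i + if i = 0 then t else 0, ?_⟩
  rw [hx]
  rw [Finset.sum_congr rfl (fun i _ => add_mul (x i) _ (a i)), Finset.sum_add_distrib]
  congr 1
  simp [ite_mul]

lemma tele_sq (x c : ℚ) (hc : c ≠ 0) (q : ℕ) :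
    ∑ j ∈ Finset.range q, (x + c * j) ^ 2 =
      ((x + c * q) ^ 3 / (3 * c) - (x + c * q) ^ 2 / 2 + c * (x + c * q) / 6)
        - (x ^ 3 / (3 * c) - x ^ 2 / 2 + c * x / 6) := by
  induction q with
  | zero => simp
  | succ q ih =>
    rw [Finset.sum_range_succ, ih]
    push_cast
    field_simp
    ring

lemma innerSumSq (A i M : ℕ) (hA : 0 < A) (hi : i < A) (hMmod : M % A = i) :
    ∑ n ∈ (Finset.range M).filter (fun n => n % A = i), (n : ℚ) ^ 2 =
      ((M : ℚ) ^ 3 / (3 * A) - (M : ℚ) ^ 2 / 2 + A * M / 6)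
        - ((i : ℚ) ^ 3 / (3 * A) - (i : ℚ) ^ 2 / 2 + A * i / 6) := by
  set q := M / A with hq
  have hMq : M = i + A * q := by
    have h := Nat.div_add_mod M A
    rw [← hq] at h
    omega
  have himg : (Finset.range M).filter (fun n => n % A = i) =
      (Finset.range q).image (fun j => i + A * j) := by
    ext n
    simp only [Finset.mem_filter, Finset.mem_range, Finset.mem_image]
    constructor
    · rintro ⟨hlt, hmod⟩
      refine ⟨n / A, ?_, ?_⟩
      · have := Nat.div_add_mod n A
        have h2 : A * (n / A) + i < i + A * q := by omega
        have : A * (n / A) < A * q := by omega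
        exact lt_of_mul_lt_mul_left this (Nat.zero_le A)
      · have := Nat.div_add_mod n A
        omega
    · rintro ⟨j, hj, rfl⟩
      constructor
      · have : A * j < A * q := (Nat.mul_lt_mul_left hA).mpr hj
        omega
      · simp [Nat.add_mul_mod_self_left, Nat.mod_eq_of_lt hi]
  rw [himg, Finset.sum_image (fun x _ y _ h => by
    have : A * x = A * y := by omega
    exact Nat.eq_of_mul_eq_mul_left hA this)]
  have hcast : (M : ℚ) = (i : ℚ) + (A : ℚ) * q := by
    rw [hMq]; push_cast; ring
  rw [hcast]
  have hAne : (A : ℚ) ≠ 0 := Nat.cast_ne_zero.mpr hA.ne'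
  rw [← tele_sq (i : ℚ) (A : ℚ) hAne q]
  apply Finset.sum_congr rfl
  intro j _
  push_cast
  ring

lemma ps1 (n : ℕ) : ∑ i ∈ Finset.Icc 1 n, (i : ℚ) = n * (n + 1) / 2 := by
  induction n with
  | zero => simp
  | succ n ih =>
    rw [Finset.sum_Icc_succ_top (Nat.succ_le_succ (Nat.zero_le n)), ih]
    push_cast; ring

lemma ps2 (n : ℕ) : ∑ i ∈ Finset.Icc 1 n, (i : ℚ) ^ 2 = n * (n + 1) * (2 * n + 1) / 6 := by
  induction n with
  | zero => simp
  | succ n ih =>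
    rw [Finset.sum_Icc_succ_top (Nat.succ_le_succ (Nat.zero_le n)), ih]
    push_cast; ring

lemma ps3 (n : ℕ) : ∑ i ∈ Finset.Icc 1 n, (i : ℚ) ^ 3 = (n * (n + 1) / 2) ^ 2 := by
  induction n with
  | zero => simp
  | succ n ih =>
    rw [Finset.sum_Icc_succ_top (Nat.succ_le_succ (Nat.zero_le n)), ih]
    push_cast; ring

/-- `s₂(a₁,…,a_k) = (1/(3a₁))·Σ m_i³ − (1/2)·Σ m_i² + (a₁/6)·Σ m_i`. -/
theorem stmt4 {k : ℕ} (a : Fin (k + 1) → ℕ)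
    (ha : ∀ i, 0 < a i)
    (hgcd : Finset.univ.gcd a = 1)
    (m : ℕ → ℕ)
    (hm : ∀ i ∈ Finset.Icc 1 (a 0 - 1),
      IsLeast {n : ℕ | 0 < n ∧ Representable a n ∧ n % (a 0) = i} (m i)) :
    ∑ᶠ n ∈ NRset a, (n : ℚ) ^ 2 =
      (1 / (3 * (a 0 : ℚ))) * ∑ i ∈ Finset.Icc 1 (a 0 - 1), (m i : ℚ) ^ 3
        - (1 / 2) * ∑ i ∈ Finset.Icc 1 (a 0 - 1), (m i : ℚ) ^ 2
        + ((a 0 : ℚ) / 6) * ∑ i ∈ Finset.Icc 1 (a 0 - 1), (m i : ℚ) := by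
  set A := a 0 with hAdef
  have hApos : 0 < A := ha 0
  have hmulrep : ∀ t : ℕ, Representable a (t * A) := by
    intro t
    have := rep_add_mul a (rep_zero a) t
    simpa using this
  by_cases hA1 : A = 1
  · -- everything is representable
    have hempty : NRset a = (∅ : Set ℕ) := by
      ext n
      simp only [NRset, Set.mem_setOf_eq, Set.mem_empty_iff_false, iff_false, not_and, not_not]
      intro _
      have := hmulrep n
      rwa [hA1, mul_one] at this
    rw [hempty, finsum_mem_empty]
    rw [show A - 1 = 0 by omega]
    simp
  · have hA2 : 2 ≤ A := by omega
    -- representable when ≥ m i in its class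
    have hrep_of_ge : ∀ i ∈ Finset.Icc 1 (A - 1), ∀ n : ℕ, n % A = i → m i ≤ n →
        Representable a n := by
      intro i hi n hmod hge
      obtain ⟨⟨hmpos, hmrep, hmmod⟩, _⟩ := hm i hi
      have hdvd : A ∣ n - m i := by
        exact (Nat.modEq_iff_dvd' hge).mp (by rw [Nat.ModEq, hmmod, hmod])
      obtain ⟨t, ht⟩ := hdvd
      have : n = m i + t * A := by rw [mul_comm t A]; omega
      rw [this]
      exact rep_add_mul a hmrep t
    -- the finite set of nonrepresentable numbers
    set T := (Finset.Icc 1 (A - 1)).biUnion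
      (fun i => (Finset.range (m i)).filter (fun n => n % A = i)) with hT
    have hset : NRset a = ↑T := by
      ext n
      simp only [NRset, Set.mem_setOf_eq, hT, Finset.coe_biUnion, Finset.mem_coe,
        Finset.mem_biUnion, Finset.mem_Icc, Finset.mem_filter, Finset.mem_range,
        Set.mem_iUnion]
      constructor
      · rintro ⟨hn, hnr⟩
        have hmodpos : n % A ≠ 0 := by
          intro h0
          have hdvd : A ∣ n := Nat.dvd_of_mod_eq_zero h0
          obtain ⟨t, ht⟩ := hdvd
          exact hnr (by rw [ht, mul_comm]; exact hmulrep t)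
        have hlt : n % A < A := Nat.mod_lt n hApos
        refine ⟨n % A, ⟨⟨by omega, by omega⟩, ?_, rfl⟩⟩
        by_contra hnot
        push_neg at hnot
        exact hnr (hrep_of_ge (n % A) (Finset.mem_Icc.mpr ⟨by omega, by omega⟩) n rfl
          (le_trans hnot (le_refl n)))
      · rintro ⟨i, ⟨⟨hi1, hi2⟩, hlt, hmod⟩⟩
        have hiI : i ∈ Finset.Icc 1 (A - 1) := Finset.mem_Icc.mpr ⟨hi1, hi2⟩
        have hnpos : 0 < n := by
          rcases Nat.eq_zero_or_pos n with h | h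
          · rw [h] at hmod; simp at hmod; omega
          · exact h
        refine ⟨hnpos, fun hrep => ?_⟩
        have := (hm i hiI).2 ⟨hnpos, hrep, hmod⟩
        omega
    rw [hset, finsum_mem_coe_finset, hT]
    have hdisj : (↑(Finset.Icc 1 (A - 1)) : Set ℕ).PairwiseDisjoint
        (fun i => (Finset.range (m i)).filter (fun n => n % A = i)) := by
      intro i _ j _ hij
      simp only [Function.onFun]
      rw [Finset.disjoint_left]
      intro n hni hnj
      simp only [Finset.mem_filter] at hni hnj
      exact hij (hni.2 ▸ hnj.2)
    rw [Finset.sum_biUnion hdisj]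
    have hAne : (A : ℚ) ≠ 0 := Nat.cast_ne_zero.mpr hApos.ne'
    have hterm : ∀ i ∈ Finset.Icc 1 (A - 1),
        ∑ n ∈ (Finset.range (m i)).filter (fun n => n % A = i), (n : ℚ) ^ 2 =
          (((m i : ℚ)) ^ 3 / (3 * A) - (m i : ℚ) ^ 2 / 2 + A * (m i) / 6)
            - ((i : ℚ) ^ 3 / (3 * A) - (i : ℚ) ^ 2 / 2 + A * i / 6) := by
      intro i hi
      obtain ⟨⟨hmpos, hmrep, hmmod⟩, _⟩ := hm i hi
      rw [Finset.mem_Icc] at hi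
      exact innerSumSq A i (m i) hApos (by omega) hmmod
    rw [Finset.sum_congr rfl hterm, Finset.sum_sub_distrib]
    have hzero : ∑ i ∈ Finset.Icc 1 (A - 1),
        ((i : ℚ) ^ 3 / (3 * A) - (i : ℚ) ^ 2 / 2 + A * i / 6) = 0 := by
      have hstep : ∑ i ∈ Finset.Icc 1 (A - 1),
          ((i : ℚ) ^ 3 / (3 * A) - (i : ℚ) ^ 2 / 2 + A * i / 6) =
          (1 / (3 * (A : ℚ))) * ∑ i ∈ Finset.Icc 1 (A - 1), (i : ℚ) ^ 3
            - (1 / 2) * ∑ i ∈ Finset.Icc 1 (A - 1), (i : ℚ) ^ 2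
            + ((A : ℚ) / 6) * ∑ i ∈ Finset.Icc 1 (A - 1), (i : ℚ) := by
        rw [Finset.mul_sum, Finset.mul_sum, Finset.mul_sum, ← Finset.sum_sub_distrib,
          ← Finset.sum_add_distrib]
        exact Finset.sum_congr rfl fun i _ => by ring
      rw [hstep, ps1, ps2, ps3]
      have hc : ((A - 1 : ℕ) : ℚ) = (A : ℚ) - 1 := by
        push_cast [Nat.cast_sub (by omega : 1 ≤ A)]; ring
      rw [hc]
      field_simp
      ring
    rw [hzero, sub_zero]
    rw [Finset.mul_sum, Finset.mul_sum, Finset.mul_sum, ← Finset.sum_sub_distrib,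
      ← Finset.sum_add_distrib]
    apply Finset.sum_congr rfl
    intro i _
    ring
end

section
/- Let a, d, k be positive integers with gcd(a,d)=1 and 2 ≤ k ≤ a, and let q, r be the nonnegative integers with a−1 = q(k−1)+r, 0 ≤ r < k−1. Then for every integer ν ≥ 0, Σ_{i=1}^{a−1} m_i^ν = Σ_{l=0}^{ν} C(ν,l)·(a^{ν−l} d^l/(l+1))·Σ_{j=0}^{l} C(l+1,j) B_j · ( (q+1)^{ν−l} a^{l+1−j} − 1 − Σ_{i=1}^{q} ((i+1)^{ν−l} − i^{ν−l})·(i(k−1)+1)^{l+1−j} ), where m_i is taken with respect to the sequence a, a+d, …, a+(k−1)d. -/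
open Finset

lemma ceil_le_iff {b : ℕ} (hb : 0 < b) (t i : ℕ) : (t + b - 1) / b ≤ i ↔ t ≤ i * b := by
  rw [Nat.div_le_iff_le_mul_add_pred hb]
  rw [mul_comm]
  omega

lemma rep_add {k : ℕ} {f : Fin k → ℕ} {n n' : ℕ} (h : Representable f n)
    (h' : Representable f n') : Representable f (n + n') := by
  obtain ⟨x, hx⟩ := h; obtain ⟨y, hy⟩ := h'
  exact ⟨x + y, by simp [hx, hy, add_mul, Finset.sum_add_distrib]⟩

lemma rep_single {k : ℕ} (f : Fin k → ℕ) (j : Fin k) : Representable f (f j) := by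
  refine ⟨fun i => if i = j then 1 else 0, ?_⟩
  simp [ite_mul, Finset.sum_ite_eq']

lemma rep_ST (a d k : ℕ) (hk : 2 ≤ k) :
    ∀ S T : ℕ, S ≤ T → T ≤ S * (k - 1) →
      Representable (fun j : Fin k => a + (j : ℕ) * d) (S * a + T * d) := by
  intro S
  induction S with
  | zero =>
    intro T h1 h2
    have : T = 0 := by omega
    subst this
    exact ⟨0, by simp⟩
  | succ S ih =>
    intro T h1 h2
    set j := min (k - 1) (T - S) with hj
    have hjk : j < k := by omega
    have hmul : (S + 1) * (k - 1) = S * (k - 1) + (k - 1) := by ring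
    have h1' : S ≤ T - j := by omega
    have hS : S ≤ S * (k - 1) := Nat.le_mul_of_pos_right _ (by omega)
    have h2' : T - j ≤ S * (k - 1) := by omega
    have hjT : j ≤ T := by omega
    have hrep := rep_add (rep_single (fun j : Fin k => a + (j : ℕ) * d) ⟨j, hjk⟩)
      (ih (T - j) h1' h2')
    have hval : a + (j : ℕ) * d + (S * a + (T - j) * d) = (S + 1) * a + T * d := by
      have : j * d + (T - j) * d = T * d := by
        rw [← Nat.add_mul]; congr 1; omega
      calc a + j * d + (S * a + (T - j) * d)
          = (a + S * a) + (j * d + (T - j) * d) := by ring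
        _ = (S + 1) * a + T * d := by rw [this]; ring
    rwa [hval] at hrep

lemma least_val (a d k : ℕ) (ha : 0 < a) (hd : 0 < d) (hk : 2 ≤ k)
    (hgcd : Nat.gcd a d = 1) (t : ℕ) (ht1 : 1 ≤ t) (ht2 : t ≤ a - 1) :
    IsLeast {n : ℕ | 0 < n ∧ Representable (fun j : Fin k => a + (j : ℕ) * d) n ∧
        n % a = (t * d) % a}
      ((t + (k - 1) - 1) / (k - 1) * a + t * d) := by
  have hb : 0 < k - 1 := by omega
  set c := (t + (k - 1) - 1) / (k - 1) with hc
  constructor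
  · refine ⟨?_, ?_, ?_⟩
    · have := Nat.mul_pos (show 0 < t by omega) hd; omega
    · exact rep_ST a d k hk c t
        ((ceil_le_iff hb t t).2 (Nat.le_mul_of_pos_right t hb))
        ((ceil_le_iff hb t c).1 le_rfl)
    · rw [Nat.add_comm, Nat.add_mul_mod_self_right]
  · rintro n ⟨hn0, ⟨x, hx⟩, hmod⟩
    set S := ∑ i, x i with hS
    set T := ∑ i : Fin k, x i * (i : ℕ) with hTdef
    have hn : n = S * a + T * d := by
      rw [hx]
      simp only [mul_add]
      rw [Finset.sum_add_distrib]
      congr 1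
      · rw [hS, Finset.sum_mul]
      · rw [hTdef, Finset.sum_mul]
        apply Finset.sum_congr rfl
        intro i _
        ring
    have hT : T ≤ S * (k - 1) := by
      calc T ≤ ∑ i : Fin k, x i * (k - 1) :=
            Finset.sum_le_sum (fun i _ => Nat.mul_le_mul_left _ (by omega))
        _ = S * (k - 1) := by rw [hS, Finset.sum_mul]
    have hmodT : T * d % a = t * d % a := by
      have : n % a = T * d % a := by
        rw [hn, Nat.add_comm, Nat.add_mul_mod_self_right]
      omega
    have hTt' : T % a = t % a :=
      Nat.ModEq.cancel_right_of_coprime hgcd hmodT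
    have htT : t ≤ T := by
      have h1 : t % a = t := Nat.mod_eq_of_lt (by omega)
      have h2 : T % a ≤ T := Nat.mod_le T a
      omega
    have hcS : c ≤ S := by
      have h1 : (T + (k - 1) - 1) / (k - 1) ≤ S := (ceil_le_iff hb T S).2 hT
      have h2 : c ≤ (T + (k - 1) - 1) / (k - 1) :=
        (ceil_le_iff hb t _).2 (le_trans htT ((ceil_le_iff hb T _).1 le_rfl))
      omega
    rw [hn]
    exact Nat.add_le_add (Nat.mul_le_mul_right a hcS) (Nat.mul_le_mul_right d htT)

lemma tele (p c n : ℕ) (h : c ≤ n) :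
    ∑ i ∈ Finset.Ico c n, (((i : ℚ) + 1) ^ p - (i : ℚ) ^ p) = (n : ℚ) ^ p - (c : ℚ) ^ p := by
  have key : ∀ N : ℕ, ∑ i ∈ Finset.range N, (((i : ℚ) + 1) ^ p - (i : ℚ) ^ p)
      = (N : ℚ) ^ p - (0 : ℚ) ^ p := by
    intro N
    have := Finset.sum_range_sub (fun i : ℕ => (i : ℚ) ^ p) N
    simp only [Nat.cast_add, Nat.cast_one, Nat.cast_zero] at this
    simpa using this
  rw [Finset.sum_Ico_eq_sub _ h, key, key]
  ring

lemma partB (a q b p l : ℕ) (hb : 0 < b) (ha1 : 1 ≤ a)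
    (hab : q * b ≤ a - 1) (hab2 : a - 1 ≤ q * b + (b - 1)) :
    ∑ t ∈ Finset.Icc 1 (a - 1), ((((t + b - 1) / b : ℕ) : ℚ)) ^ p * (t : ℚ) ^ l
      = ((q : ℚ) + 1) ^ p * (∑ x ∈ Finset.range a, (x : ℚ) ^ l)
        - (∑ x ∈ Finset.range 1, (x : ℚ) ^ l)
        - ∑ i ∈ Finset.Icc 1 q, (((i : ℚ) + 1) ^ p - (i : ℚ) ^ p)
            * (∑ x ∈ Finset.range (i * b + 1), (x : ℚ) ^ l) := by
  -- abbreviations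
  have key : ∀ t ∈ Finset.Icc 1 (a - 1),
      ((((t + b - 1) / b : ℕ) : ℚ)) ^ p
        = ((q : ℚ) + 1) ^ p - ∑ i ∈ Finset.Icc 1 q,
            (if (t + b - 1) / b ≤ i then ((i : ℚ) + 1) ^ p - (i : ℚ) ^ p else 0) := by
    intro t ht
    simp only [Finset.mem_Icc] at ht
    set c := (t + b - 1) / b with hc
    have hc1 : 1 ≤ c := by
      by_contra h
      have : c ≤ 0 := by omega
      have := (ceil_le_iff hb t 0).1 this
      omega
    have hcq : c ≤ q + 1 := by
      apply (ceil_le_iff hb t (q + 1)).2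
      have : (q + 1) * b = q * b + b := by ring
      omega
    have hfilt : ∑ i ∈ Finset.Icc 1 q,
        (if c ≤ i then ((i : ℚ) + 1) ^ p - (i : ℚ) ^ p else 0)
        = ∑ i ∈ Finset.Ico c (q + 1), (((i : ℚ) + 1) ^ p - (i : ℚ) ^ p) := by
      rw [← Finset.sum_filter]
      apply Finset.sum_congr _ (fun _ _ => rfl)
      ext i
      simp only [Finset.mem_filter, Finset.mem_Icc, Finset.mem_Ico]
      omega
    rw [hfilt, tele p c (q + 1) hcq]
    push_cast
    ring
  have inner : ∀ i ∈ Finset.Icc 1 q,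
      ∑ t ∈ Finset.Icc 1 (a - 1),
          (if (t + b - 1) / b ≤ i then ((i : ℚ) + 1) ^ p - (i : ℚ) ^ p else 0) * (t : ℚ) ^ l
        = (((i : ℚ) + 1) ^ p - (i : ℚ) ^ p) * ∑ t ∈ Finset.Icc 1 (i * b), (t : ℚ) ^ l := by
    intro i hi
    simp only [Finset.mem_Icc] at hi
    have hib : i * b ≤ a - 1 := le_trans (Nat.mul_le_mul_right b hi.2) hab
    simp only [ite_mul, zero_mul]
    rw [← Finset.sum_filter, Finset.mul_sum]
    apply Finset.sum_congr _ (fun _ _ => rfl)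
    ext t
    simp only [Finset.mem_filter, Finset.mem_Icc]
    constructor
    · rintro ⟨h1, h2⟩
      have := (ceil_le_iff hb t i).1 h2
      omega
    · rintro ⟨h1, h2⟩
      exact ⟨⟨h1, le_trans h2 hib⟩, (ceil_le_iff hb t i).2 h2⟩
  have LHSeq : ∑ t ∈ Finset.Icc 1 (a - 1), ((((t + b - 1) / b : ℕ) : ℚ)) ^ p * (t : ℚ) ^ l
      = ((q : ℚ) + 1) ^ p * (∑ t ∈ Finset.Icc 1 (a - 1), (t : ℚ) ^ l)
        - ∑ i ∈ Finset.Icc 1 q, (((i : ℚ) + 1) ^ p - (i : ℚ) ^ p)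
            * (∑ t ∈ Finset.Icc 1 (i * b), (t : ℚ) ^ l) := by
    rw [Finset.sum_congr rfl (fun t ht => by rw [key t ht])]
    simp only [sub_mul, Finset.sum_mul]
    rw [Finset.sum_sub_distrib, Finset.sum_comm, ← Finset.mul_sum,
      Finset.sum_congr rfl inner]
    congr 1
    exact Finset.sum_congr rfl (fun i _ => by ring)
  rw [LHSeq]
  have hsplit : ∀ n : ℕ, ∑ x ∈ Finset.range (n + 1), (x : ℚ) ^ l
      = (0 : ℚ) ^ l + ∑ x ∈ Finset.Icc 1 n, (x : ℚ) ^ l := by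
    intro n
    have : Finset.range (n + 1) = insert 0 (Finset.Icc 1 n) := by
      ext x; simp [Finset.mem_range, Finset.mem_Icc]; omega
    rw [this, Finset.sum_insert (by simp)]
    norm_num
  have hra : Finset.range a = Finset.range ((a - 1) + 1) := by congr 1; omega
  have htel : ∑ i ∈ Finset.Icc 1 q, (((i : ℚ) + 1) ^ p - (i : ℚ) ^ p)
      = ((q : ℚ) + 1) ^ p - 1 := by
    have : Finset.Icc 1 q = Finset.Ico 1 (q + 1) := by
      ext i; simp [Finset.mem_Icc, Finset.mem_Ico]
    rw [this, tele p 1 (q + 1) (by omega)]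
    push_cast; ring
  have hsum2 : ∑ i ∈ Finset.Icc 1 q, (((i : ℚ) + 1) ^ p - (i : ℚ) ^ p)
        * (∑ x ∈ Finset.range (i * b + 1), (x : ℚ) ^ l)
      = (((q : ℚ) + 1) ^ p - 1) * (0 : ℚ) ^ l
        + ∑ i ∈ Finset.Icc 1 q, (((i : ℚ) + 1) ^ p - (i : ℚ) ^ p)
            * ∑ x ∈ Finset.Icc 1 (i * b), (x : ℚ) ^ l := by
    calc ∑ i ∈ Finset.Icc 1 q, (((i : ℚ) + 1) ^ p - (i : ℚ) ^ p)
          * (∑ x ∈ Finset.range (i * b + 1), (x : ℚ) ^ l)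
        = ∑ i ∈ Finset.Icc 1 q, ((((i : ℚ) + 1) ^ p - (i : ℚ) ^ p) * (0 : ℚ) ^ l
            + (((i : ℚ) + 1) ^ p - (i : ℚ) ^ p) * ∑ x ∈ Finset.Icc 1 (i * b), (x : ℚ) ^ l) :=
          Finset.sum_congr rfl (fun i _ => by rw [hsplit (i * b)]; ring)
      _ = _ := by rw [Finset.sum_add_distrib, ← Finset.sum_mul, htel]
  rw [hra, hsplit (a - 1), hsum2]
  simp only [Finset.sum_range_one, Nat.cast_zero]
  ring

/-- Power sums of the minimal representatives `m_i` for the arithmetic sequence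
`a, a+d, …, a+(k−1)d`. -/
theorem stmt5 (a d k q r : ℕ) (ha : 0 < a) (hd : 0 < d)
    (hk : 2 ≤ k) (hka : k ≤ a) (hgcd : Nat.gcd a d = 1)
    (hqr : a - 1 = q * (k - 1) + r) (hr : r < k - 1)
    (m : ℕ → ℕ)
    (hm : ∀ i ∈ Finset.Icc 1 (a - 1),
      IsLeast {n : ℕ | 0 < n ∧
        Representable (fun j : Fin k => a + (j : ℕ) * d) n ∧ n % a = i} (m i))
    (ν : ℕ) :
    ∑ i ∈ Finset.Icc 1 (a - 1), (m i : ℚ) ^ ν =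
      ∑ l ∈ Finset.range (ν + 1), (ν.choose l : ℚ) *
        ((a : ℚ) ^ (ν - l) * (d : ℚ) ^ l / ((l : ℚ) + 1)) *
        ∑ j ∈ Finset.range (l + 1), ((l + 1).choose j : ℚ) * bernoulli j *
          ( ((q : ℚ) + 1) ^ (ν - l) * (a : ℚ) ^ (l + 1 - j) - 1
            - ∑ i ∈ Finset.Icc 1 q,
                (((i : ℚ) + 1) ^ (ν - l) - (i : ℚ) ^ (ν - l)) *
                  ((i * (k - 1) + 1 : ℕ) : ℚ) ^ (l + 1 - j) ) := by
  have hb : 0 < k - 1 := by omega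
  set c : ℕ → ℕ := fun t => (t + (k - 1) - 1) / (k - 1) with hcdef
  have hi : ∀ t ∈ Finset.Icc 1 (a - 1), (t * d) % a ∈ Finset.Icc 1 (a - 1) := by
    intro t ht
    simp only [Finset.mem_Icc] at ht ⊢
    constructor
    · by_contra h
      have h0 : (t * d) % a = 0 := by omega
      have hdvd : a ∣ t * d := Nat.dvd_of_mod_eq_zero h0
      have h2 : a ∣ t := Nat.Coprime.dvd_of_dvd_mul_right hgcd hdvd
      have := Nat.le_of_dvd (by omega) h2
      omega
    · have := Nat.mod_lt (t * d) ha; omega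
  have hinj : ∀ t1 ∈ Finset.Icc 1 (a - 1), ∀ t2 ∈ Finset.Icc 1 (a - 1),
      (t1 * d) % a = (t2 * d) % a → t1 = t2 := by
    intro t1 h1 t2 h2 heq
    simp only [Finset.mem_Icc] at h1 h2
    have h3 : t1 % a = t2 % a := Nat.ModEq.cancel_right_of_coprime hgcd heq
    rwa [Nat.mod_eq_of_lt (by omega), Nat.mod_eq_of_lt (by omega)] at h3
  have step1 : ∑ i ∈ Finset.Icc 1 (a - 1), (m i : ℚ) ^ ν
      = ∑ t ∈ Finset.Icc 1 (a - 1), ((c t * a + t * d : ℕ) : ℚ) ^ ν := by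
    symm
    apply Finset.sum_bij (fun t _ => (t * d) % a) hi
      (fun t1 h1 t2 h2 => hinj t1 h1 t2 h2)
    · intro bb hbb
      obtain ⟨t, ht, hval⟩ := Finset.surj_on_of_inj_on_of_card_le
        (fun t (_ : t ∈ Finset.Icc 1 (a - 1)) => (t * d) % a) hi
        (fun t1 t2 h1 h2 => hinj t1 h1 t2 h2) le_rfl bb hbb
      exact ⟨t, ht, hval.symm⟩
    · intro t ht
      simp only [Finset.mem_Icc] at ht
      have hle := least_val a d k ha hd hk hgcd t ht.1 ht.2
      have hmem := hi t (by simp only [Finset.mem_Icc]; exact ht)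
      have hval : m ((t * d) % a) = c t * a + t * d := (hm _ hmem).unique hle
      rw [hval]
  rw [step1]
  have expand : ∑ t ∈ Finset.Icc 1 (a - 1), ((c t * a + t * d : ℕ) : ℚ) ^ ν
      = ∑ l ∈ Finset.range (ν + 1), ∑ t ∈ Finset.Icc 1 (a - 1),
          ((t : ℚ) * d) ^ l * ((c t : ℚ) * a) ^ (ν - l) * (ν.choose l : ℚ) := by
    rw [← Finset.sum_comm]
    apply Finset.sum_congr rfl
    intro t _
    have hcast : ((c t * a + t * d : ℕ) : ℚ) = (t : ℚ) * d + (c t : ℚ) * a := by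
      push_cast; ring
    rw [hcast, add_pow]
  rw [expand]
  have hF : ∀ l n : ℕ, ∑ j ∈ Finset.range (l + 1),
      ((l + 1).choose j : ℚ) * bernoulli j * (n : ℚ) ^ (l + 1 - j)
      = ((l : ℚ) + 1) * ∑ x ∈ Finset.range n, (x : ℚ) ^ l := by
    intro l n
    rw [sum_range_pow n l, Finset.mul_sum]
    apply Finset.sum_congr rfl
    intro j hj
    have hl0 : ((l : ℚ) + 1) ≠ 0 := by positivity
    push_cast
    field_simp
    try ring
    try tauto
  apply Finset.sum_congr rfl
  intro l hl
  set p := ν - l with hp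
  have hl0 : ((l : ℚ) + 1) ≠ 0 := by positivity
  have hsumj : ∑ j ∈ Finset.range (l + 1), ((l + 1).choose j : ℚ) * bernoulli j *
        ( ((q : ℚ) + 1) ^ p * (a : ℚ) ^ (l + 1 - j) - 1
          - ∑ i ∈ Finset.Icc 1 q,
              (((i : ℚ) + 1) ^ p - (i : ℚ) ^ p) * ((i * (k - 1) + 1 : ℕ) : ℚ) ^ (l + 1 - j))
      = ((l : ℚ) + 1) * ( ((q : ℚ) + 1) ^ p * (∑ x ∈ Finset.range a, (x : ℚ) ^ l)
          - (∑ x ∈ Finset.range 1, (x : ℚ) ^ l)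
          - ∑ i ∈ Finset.Icc 1 q, (((i : ℚ) + 1) ^ p - (i : ℚ) ^ p)
              * (∑ x ∈ Finset.range (i * (k - 1) + 1), (x : ℚ) ^ l)) := by
    have e1 : ∑ j ∈ Finset.range (l + 1), ((l + 1).choose j : ℚ) * bernoulli j *
          (((q : ℚ) + 1) ^ p * (a : ℚ) ^ (l + 1 - j))
        = ((q : ℚ) + 1) ^ p * (((l : ℚ) + 1) * ∑ x ∈ Finset.range a, (x : ℚ) ^ l) := by
      rw [← hF l a, Finset.mul_sum]
      exact Finset.sum_congr rfl (fun j _ => by ring)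
    have e2 : ∑ j ∈ Finset.range (l + 1), ((l + 1).choose j : ℚ) * bernoulli j * (1 : ℚ)
        = ((l : ℚ) + 1) * ∑ x ∈ Finset.range 1, (x : ℚ) ^ l := by
      rw [← hF l 1]
      exact Finset.sum_congr rfl (fun j _ => by norm_num)
    have e3 : ∑ j ∈ Finset.range (l + 1), ((l + 1).choose j : ℚ) * bernoulli j *
          (∑ i ∈ Finset.Icc 1 q, (((i : ℚ) + 1) ^ p - (i : ℚ) ^ p)
            * ((i * (k - 1) + 1 : ℕ) : ℚ) ^ (l + 1 - j))
        = ((l : ℚ) + 1) * ∑ i ∈ Finset.Icc 1 q, (((i : ℚ) + 1) ^ p - (i : ℚ) ^ p)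
            * (∑ x ∈ Finset.range (i * (k - 1) + 1), (x : ℚ) ^ l) := by
      calc ∑ j ∈ Finset.range (l + 1), ((l + 1).choose j : ℚ) * bernoulli j *
            (∑ i ∈ Finset.Icc 1 q, (((i : ℚ) + 1) ^ p - (i : ℚ) ^ p)
              * ((i * (k - 1) + 1 : ℕ) : ℚ) ^ (l + 1 - j))
          = ∑ j ∈ Finset.range (l + 1), ∑ i ∈ Finset.Icc 1 q,
              (((i : ℚ) + 1) ^ p - (i : ℚ) ^ p) *
                (((l + 1).choose j : ℚ) * bernoulli j
                  * ((i * (k - 1) + 1 : ℕ) : ℚ) ^ (l + 1 - j)) := by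
            apply Finset.sum_congr rfl
            intro j _
            rw [Finset.mul_sum]
            exact Finset.sum_congr rfl (fun i _ => by ring)
        _ = ∑ i ∈ Finset.Icc 1 q, ∑ j ∈ Finset.range (l + 1),
              (((i : ℚ) + 1) ^ p - (i : ℚ) ^ p) *
                (((l + 1).choose j : ℚ) * bernoulli j
                  * ((i * (k - 1) + 1 : ℕ) : ℚ) ^ (l + 1 - j)) := Finset.sum_comm
        _ = ∑ i ∈ Finset.Icc 1 q, (((i : ℚ) + 1) ^ p - (i : ℚ) ^ p) *
              (((l : ℚ) + 1) * ∑ x ∈ Finset.range (i * (k - 1) + 1), (x : ℚ) ^ l) := by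
            apply Finset.sum_congr rfl
            intro i _
            rw [← Finset.mul_sum, hF l (i * (k - 1) + 1)]
        _ = ((l : ℚ) + 1) * ∑ i ∈ Finset.Icc 1 q, (((i : ℚ) + 1) ^ p - (i : ℚ) ^ p)
              * (∑ x ∈ Finset.range (i * (k - 1) + 1), (x : ℚ) ^ l) := by
            rw [Finset.mul_sum]
            exact Finset.sum_congr rfl (fun i _ => by ring)
    calc ∑ j ∈ Finset.range (l + 1), ((l + 1).choose j : ℚ) * bernoulli j *
          ( ((q : ℚ) + 1) ^ p * (a : ℚ) ^ (l + 1 - j) - 1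
            - ∑ i ∈ Finset.Icc 1 q,
                (((i : ℚ) + 1) ^ p - (i : ℚ) ^ p) * ((i * (k - 1) + 1 : ℕ) : ℚ) ^ (l + 1 - j))
        = ∑ j ∈ Finset.range (l + 1),
            (((l + 1).choose j : ℚ) * bernoulli j * (((q : ℚ) + 1) ^ p * (a : ℚ) ^ (l + 1 - j))
              - ((l + 1).choose j : ℚ) * bernoulli j * 1
              - ((l + 1).choose j : ℚ) * bernoulli j *
                  (∑ i ∈ Finset.Icc 1 q, (((i : ℚ) + 1) ^ p - (i : ℚ) ^ p)
                    * ((i * (k - 1) + 1 : ℕ) : ℚ) ^ (l + 1 - j))) :=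
          Finset.sum_congr rfl (fun j _ => by ring)
      _ = _ := by
          rw [Finset.sum_sub_distrib, Finset.sum_sub_distrib, e1, e2, e3]
          ring
  rw [hsumj]
  have hab : q * (k - 1) ≤ a - 1 := by rw [hqr]; exact Nat.le_add_right _ _
  have hab2 : a - 1 ≤ q * (k - 1) + (k - 1 - 1) := by
    rw [hqr]; exact Nat.add_le_add_left (by omega) _
  have hL : ∑ t ∈ Finset.Icc 1 (a - 1),
        ((t : ℚ) * d) ^ l * ((c t : ℚ) * a) ^ p * (ν.choose l : ℚ)
      = (ν.choose l : ℚ) * ((a : ℚ) ^ p * (d : ℚ) ^ l) *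
          ∑ t ∈ Finset.Icc 1 (a - 1), ((c t : ℚ)) ^ p * (t : ℚ) ^ l := by
    rw [Finset.mul_sum]
    exact Finset.sum_congr rfl (fun t _ => by rw [mul_pow, mul_pow]; ring)
  rw [hL, partB a q (k - 1) p l hb (by omega) hab hab2]
  field_simp
end

section
/- For all integers μ, κ, j with 0 ≤ κ ≤ μ and 0 < j < μ+1−κ, Σ_{n=κ}^{μ} C(μ,n) C(n,κ) ((−1)^{n−κ}/(n+1−κ)) C(n+1−κ, j) = 0. -/
/-!
Put `n = κ + m` and `j = i + 1`. The identities `C(μ, κ+m) C(κ+m, κ) = C(μ, κ) C(μ-κ, m)` and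
`C(m+1, i+1) / (m+1) = C(m, i) / (i+1)` turn the sum into `C(μ, κ) / (i+1)` times
`∑ₘ (-1)^m C(N, m) C(m, i)` with `N = μ - κ > i`. By the first identity again this is
`(-1)^i C(N, i) ∑ₜ (-1)^t C(N-i, t)`, an alternating row sum of Pascal's triangle, hence zero.
-/

open Finset

theorem Nat.choose_add_mul_choose_left (N k t : ℕ) :
    N.choose (k + t) * (k + t).choose k = N.choose k * (N - k).choose t := by
  simpa using Nat.choose_mul (n := N) (Nat.le_add_right k t)

theorem alternating_sum_range_choose_mul_choose {N k : ℕ} (hk : k < N) :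
    ∑ m ∈ range (N + 1), (-1 : ℤ) ^ m * N.choose m * m.choose k = 0 := by
  have below : ∑ m ∈ Ico 0 k, (-1 : ℤ) ^ m * N.choose m * m.choose k = 0 :=
    sum_eq_zero fun m hm => by simp [Nat.choose_eq_zero_of_lt (mem_Ico.1 hm).2]
  rw [range_eq_Ico, ← sum_Ico_consecutive _ (Nat.zero_le k) (by omega : k ≤ N + 1), below,
    zero_add, sum_Ico_eq_sum_range, show N + 1 - k = N - k + 1 by omega]
  calc ∑ t ∈ range (N - k + 1), (-1 : ℤ) ^ (k + t) * N.choose (k + t) * (k + t).choose k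
      = (-1) ^ k * N.choose k * ∑ t ∈ range (N - k + 1), (-1 : ℤ) ^ t * (N - k).choose t := by
        rw [mul_sum]
        refine sum_congr rfl fun t _ => ?_
        have := congrArg (Nat.cast : ℕ → ℤ) (Nat.choose_add_mul_choose_left N k t)
        push_cast at this
        linear_combination (-1 : ℤ) ^ (k + t) * this
    _ = 0 := by rw [Int.alternating_sum_range_choose_of_ne (by omega), mul_zero]

theorem Nat.cast_choose_succ_succ_div {K : Type*} [Field K] [CharZero K] (m i : ℕ) :
    ((m + 1).choose (i + 1) : K) / (m + 1) = m.choose i / (i + 1) := by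
  rw [div_eq_div_iff (Nat.cast_add_one_ne_zero m) (Nat.cast_add_one_ne_zero i)]
  exact_mod_cast (Nat.add_one_mul_choose_eq m i).symm.trans (mul_comm _ _)

theorem stmt8_general (μ κ j : ℕ) (hj0 : 0 < j) (hj : j < μ + 1 - κ) :
    ∑ n ∈ Finset.Icc κ μ,
        (μ.choose n : ℚ) * (n.choose κ : ℚ) *
          ((-1 : ℚ) ^ (n - κ) / ((n + 1 - κ : ℕ) : ℚ)) * ((n + 1 - κ).choose j : ℚ) =
      0 := by
  obtain ⟨i, rfl⟩ := Nat.exists_eq_add_one.2 hj0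
  rw [← Ico_add_one_right_eq_Icc, sum_Ico_eq_sum_range, show μ + 1 - κ = μ - κ + 1 by omega]
  calc _ = (μ.choose κ : ℚ) / (i + 1) *
        ((∑ m ∈ range (μ - κ + 1), (-1 : ℤ) ^ m * (μ - κ).choose m * m.choose i : ℤ) : ℚ) := by
        push_cast
        rw [mul_sum]
        refine sum_congr rfl fun m _ => ?_
        have factor := congrArg (Nat.cast : ℕ → ℚ) (Nat.choose_add_mul_choose_left μ κ m)
        push_cast at factor
        rw [Nat.add_sub_cancel_left, show κ + m + 1 - κ = m + 1 by omega]
        calc _ = (μ.choose (κ + m) * (κ + m).choose κ : ℚ) * (-1) ^ m *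
              (((m + 1).choose (i + 1) : ℚ) / (m + 1)) := by push_cast; ring
          _ = _ := by rw [factor, Nat.cast_choose_succ_succ_div]; ring
    _ = 0 := by rw [alternating_sum_range_choose_mul_choose (by omega), Int.cast_zero, mul_zero]

/-- `Σ_{n=κ}^{μ} C(μ,n) C(n,κ) ((−1)^{n−κ}/(n+1−κ)) C(n+1−κ,j) = 0`
for `0 < j < μ+1−κ`. -/
theorem stmt8 (μ κ j : ℕ) (h : κ ≤ μ) (hj0 : 0 < j) (hj : j < μ + 1 - κ) :
    ∑ n ∈ Finset.Icc κ μ,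
        (μ.choose n : ℚ) * (n.choose κ : ℚ) *
          ((-1 : ℚ) ^ (n - κ) / ((n + 1 - κ : ℕ) : ℚ)) * ((n + 1 - κ).choose j : ℚ) =
      0 :=
  stmt8_general μ κ j hj0 hj
end

section
/- For all integers μ, ℓ with 1 ≤ ℓ ≤ μ, Σ_{κ=0}^{ℓ−1} C(μ,κ) C(μ+1−κ, ℓ−κ) · B_κ/((μ+1−κ)(ℓ+1−κ)) = −C(μ,ℓ)·B_ℓ/(μ+1−ℓ). -/
open Finset Nat

/-!
Both `C(μ,κ) C(μ+1-κ,ℓ-κ) / ((μ+1-κ)(ℓ+1-κ))` and `C(μ+1,ℓ+1) C(ℓ+1,κ) / ((μ+1)(μ+1-ℓ))` equal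
the trinomial-type coefficient `μ! / (κ! (ℓ+1-κ)! (μ+1-ℓ)!)`. Hence, once the sum is extended to
`κ = ℓ`, it is a constant multiple of `∑_{κ ≤ ℓ} C(ℓ+1,κ) B_κ`, which vanishes for `ℓ ≥ 1` by the
defining recurrence of the Bernoulli numbers; the added term `κ = ℓ` is minus the right-hand side.
-/

section

variable {μ ℓ κ : ℕ}

lemma choose_mul_choose_div_eq_factorial (hκ : κ ≤ ℓ) (hℓ : ℓ ≤ μ) :
    (μ.choose κ : ℚ) * ((μ + 1 - κ).choose (ℓ - κ) : ℚ) /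
        (((μ + 1 - κ : ℕ) : ℚ) * ((ℓ + 1 - κ : ℕ) : ℚ)) =
      μ ! / (κ ! * (ℓ + 1 - κ)! * (μ + 1 - ℓ)!) := by
  obtain ⟨a, rfl⟩ : ∃ a, ℓ = κ + a := ⟨ℓ - κ, by omega⟩
  obtain ⟨b, rfl⟩ : ∃ b, μ = κ + a + b := ⟨μ - (κ + a), by omega⟩
  rw [cast_choose ℚ (by omega : κ ≤ κ + a + b),
    cast_choose ℚ (by omega : κ + a - κ ≤ κ + a + b + 1 - κ),
    show κ + a + b + 1 - κ = a + b + 1 by omega, show κ + a - κ = a by omega,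
    show κ + a + 1 - κ = a + 1 by omega, show κ + a + b + 1 - (κ + a) = b + 1 by omega,
    show κ + a + b - κ = a + b by omega, show a + b + 1 - a = b + 1 by omega,
    factorial_succ (a + b), factorial_succ a]
  field_simp
  push_cast
  ring

lemma choose_div_mul_choose_eq_factorial (hκ : κ ≤ ℓ + 1) (hℓ : ℓ ≤ μ) :
    ((μ + 1).choose (ℓ + 1) : ℚ) / (((μ + 1 : ℕ) : ℚ) * ((μ + 1 - ℓ : ℕ) : ℚ)) *
        ((ℓ + 1).choose κ : ℚ) =
      μ ! / (κ ! * (ℓ + 1 - κ)! * (μ + 1 - ℓ)!) := by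
  obtain ⟨b, rfl⟩ : ∃ b, μ = ℓ + b := ⟨μ - ℓ, by omega⟩
  rw [cast_choose ℚ (by omega : ℓ + 1 ≤ ℓ + b + 1), cast_choose ℚ hκ,
    show ℓ + b + 1 - (ℓ + 1) = b by omega, show ℓ + b + 1 - ℓ = b + 1 by omega,
    factorial_succ (ℓ + b), factorial_succ b]
  field_simp
  push_cast
  ring

end

lemma sum_choose_mul_choose_mul_bernoulli_div_eq_zero {μ ℓ : ℕ} (h1 : 1 ≤ ℓ) (h2 : ℓ ≤ μ) :
    ∑ κ ∈ range (ℓ + 1), (μ.choose κ : ℚ) * ((μ + 1 - κ).choose (ℓ - κ) : ℚ) * bernoulli κ /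
        (((μ + 1 - κ : ℕ) : ℚ) * ((ℓ + 1 - κ : ℕ) : ℚ)) = 0 := by
  set c : ℚ := ((μ + 1).choose (ℓ + 1) : ℚ) / (((μ + 1 : ℕ) : ℚ) * ((μ + 1 - ℓ : ℕ) : ℚ))
  have hterm : ∀ κ ∈ range (ℓ + 1),
      (μ.choose κ : ℚ) * ((μ + 1 - κ).choose (ℓ - κ) : ℚ) * bernoulli κ /
          (((μ + 1 - κ : ℕ) : ℚ) * ((ℓ + 1 - κ : ℕ) : ℚ)) =
        c * (((ℓ + 1).choose κ : ℚ) * bernoulli κ) := by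
    intro κ hκ
    have hκ : κ ≤ ℓ := Nat.le_of_lt_succ (mem_range.1 hκ)
    rw [mul_div_right_comm, choose_mul_choose_div_eq_factorial hκ h2, ← mul_assoc,
      choose_div_mul_choose_eq_factorial (hκ.trans ℓ.le_succ) h2]
  rw [sum_congr rfl hterm, ← mul_sum, sum_bernoulli, if_neg (by omega), mul_zero]

/-- `Σ_{κ=0}^{ℓ−1} C(μ,κ) C(μ+1−κ,ℓ−κ)·B_κ/((μ+1−κ)(ℓ+1−κ)) = −C(μ,ℓ)·B_ℓ/(μ+1−ℓ)`. -/
theorem stmt9 (μ ℓ : ℕ) (h1 : 1 ≤ ℓ) (h2 : ℓ ≤ μ) :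
    ∑ κ ∈ Finset.range ℓ,
        (μ.choose κ : ℚ) * ((μ + 1 - κ).choose (ℓ - κ) : ℚ) * bernoulli κ /
          (((μ + 1 - κ : ℕ) : ℚ) * ((ℓ + 1 - κ : ℕ) : ℚ)) =
      -(μ.choose ℓ : ℚ) * bernoulli ℓ / ((μ + 1 - ℓ : ℕ) : ℚ) := by
  have key := sum_choose_mul_choose_mul_bernoulli_div_eq_zero h1 h2
  rw [sum_range_succ, Nat.sub_self, Nat.add_sub_cancel_left, Nat.choose_zero_right] at key
  push_cast at key
  linear_combination key
end

section
/- For every positive integer a and every integer μ ≥ 0, Σ_{κ=0}^{μ} C(μ,κ)·((−1)^{μ−κ} a^{κ−1} B_κ/(μ+1−κ))·Σ_{i=1}^{a−1} (−i)^{μ+1−κ} = (B_{μ+1}/(μ+1))·(a^{μ+1}−1). -/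
/-!
With `B(t) = t / (eᵗ - 1)`, the power series identity `B(a t) · ∑_{i<a} e^{i t} = a · B(t)` holds
because both sides multiplied by `eᵗ - 1` equal `a t`. Comparing coefficients of `tⁿ` gives
`∑_{κ ≤ n} C(n,κ) B_κ a^κ ∑_{i<a} i^(n-κ) = a B_n`. Since `C(μ,κ) / (μ+1-κ) = C(μ+1,κ) / (μ+1)`,
the theorem is this identity for `n = μ + 1`, with its `κ = n` term `B_n a^(n+1)` moved to the
right-hand side.
-/

open Finset PowerSeries

theorem rescale_bernoulliPowerSeries_mul_sum_exp_pow (a : ℕ) :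
    rescale (a : ℚ) (bernoulliPowerSeries ℚ) * ∑ i ∈ range a, exp ℚ ^ i =
      C (a : ℚ) * bernoulliPowerSeries ℚ := by
  have hexp : exp ℚ - 1 ≠ 0 := fun h => by simpa using congrArg (coeff 1) h
  apply mul_right_cancel₀ hexp
  calc rescale (a : ℚ) (bernoulliPowerSeries ℚ) * (∑ i ∈ range a, exp ℚ ^ i) * (exp ℚ - 1)
      = rescale (a : ℚ) (bernoulliPowerSeries ℚ * (exp ℚ - 1)) := by
        rw [mul_assoc, geom_sum_mul, exp_pow_eq_rescale_exp, map_mul, map_sub, map_one]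
    _ = C (a : ℚ) * bernoulliPowerSeries ℚ * (exp ℚ - 1) := by
        rw [bernoulliPowerSeries_mul_exp_sub_one, mul_assoc, bernoulliPowerSeries_mul_exp_sub_one,
          rescale_X]

theorem sum_choose_mul_bernoulli_mul_sum_range_pow (a n : ℕ) :
    ∑ k ∈ range (n + 1), (n.choose k : ℚ) * bernoulli k * (a : ℚ) ^ k *
        ∑ i ∈ range a, (i : ℚ) ^ (n - k) = a * bernoulli n := by
  have h := congrArg (coeff n) (rescale_bernoulliPowerSeries_mul_sum_exp_pow a)
  rw [coeff_mul, Nat.sum_antidiagonal_eq_sum_range_succ_mk, exp_pow_sum, coeff_C_mul] at h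
  simp only [coeff_rescale, coeff_mk, bernoulliPowerSeries, Algebra.algebraMap_self,
    RingHom.id_apply] at h
  have hn : (n.factorial : ℚ) ≠ 0 := by positivity
  rw [show (a : ℚ) * bernoulli n = n.factorial * (a * (bernoulli n / n.factorial)) by field_simp,
    ← h, mul_sum]
  refine sum_congr rfl fun k hk => ?_
  have hk : k ≤ n := Nat.lt_succ_iff.mp (mem_range.mp hk)
  rw [← Nat.choose_mul_factorial_mul_factorial hk]
  simp only [mul_sum]
  refine sum_congr rfl fun i _ => ?_
  push_cast
  field_simp

theorem sum_Icc_one_pred_neg_pow (a : ℕ) {m : ℕ} (hm : m ≠ 0) :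
    ∑ i ∈ Icc 1 (a - 1), (-(i : ℚ)) ^ m = (-1) ^ m * ∑ i ∈ range a, (i : ℚ) ^ m := by
  rw [mul_sum]
  refine sum_subset_zero_on_sdiff (fun i hi => by simp only [mem_Icc, mem_range] at hi ⊢; omega)
    (fun i hi => ?_) fun i _ => neg_pow _ _
  obtain rfl : i = 0 := by simp only [mem_sdiff, mem_Icc, mem_range] at hi; omega
  simp [hm]

theorem Nat.cast_choose_div_succ_sub {K : Type*} [Field K] [CharZero K] {n k : ℕ} (hk : k ≤ n) :
    (n.choose k : K) / ((n + 1 - k : ℕ) : K) = ((n + 1).choose k : K) / (n + 1) := by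
  rw [div_eq_div_iff (by norm_cast; omega) (Nat.cast_add_one_ne_zero n)]
  exact_mod_cast Nat.choose_mul_succ_eq n k

/-- `Σ_{κ=0}^{μ} C(μ,κ)·((−1)^{μ−κ} a^{κ−1} B_κ/(μ+1−κ))·Σ_{i=1}^{a−1}(−i)^{μ+1−κ}
  = (B_{μ+1}/(μ+1))·(a^{μ+1}−1)`. -/
theorem stmt10 (a : ℕ) (ha : 0 < a) (μ : ℕ) :
    ∑ κ ∈ Finset.range (μ + 1),
        (μ.choose κ : ℚ) *
          ((-1 : ℚ) ^ (μ - κ) * (a : ℚ) ^ ((κ : ℤ) - 1) * bernoulli κ /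
            ((μ + 1 - κ : ℕ) : ℚ)) *
          ∑ i ∈ Finset.Icc 1 (a - 1), (-(i : ℚ)) ^ (μ + 1 - κ) =
      bernoulli (μ + 1) / ((μ : ℚ) + 1) * ((a : ℚ) ^ (μ + 1) - 1) := by
  have ha' : (a : ℚ) ≠ 0 := by positivity
  have hterm : ∀ κ ∈ range (μ + 1),
      (μ.choose κ : ℚ) * ((-1 : ℚ) ^ (μ - κ) * (a : ℚ) ^ ((κ : ℤ) - 1) * bernoulli κ /
          ((μ + 1 - κ : ℕ) : ℚ)) * ∑ i ∈ Icc 1 (a - 1), (-(i : ℚ)) ^ (μ + 1 - κ) =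
        -(((μ + 1).choose κ : ℚ) * bernoulli κ * (a : ℚ) ^ κ *
          ∑ i ∈ range a, (i : ℚ) ^ (μ + 1 - κ)) / (a * (μ + 1)) := by
    intro κ hκ
    have hκ : κ ≤ μ := Nat.lt_succ_iff.mp (mem_range.mp hκ)
    have hsign : (-1 : ℚ) ^ (μ - κ) * (-1) ^ (μ + 1 - κ) = -1 := by
      rw [← pow_add, show μ - κ + (μ + 1 - κ) = 2 * (μ - κ) + 1 by omega, pow_succ, pow_mul]
      norm_num
    rw [sum_Icc_one_pred_neg_pow a (by omega), zpow_sub₀ ha', zpow_natCast, zpow_one]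
    calc _ = (μ.choose κ : ℚ) / ((μ + 1 - κ : ℕ) : ℚ) * ((-1) ^ (μ - κ) * (-1) ^ (μ + 1 - κ)) *
          (bernoulli κ * (a : ℚ) ^ κ * (∑ i ∈ range a, (i : ℚ) ^ (μ + 1 - κ)) / a) := by ring
      _ = _ := by rw [Nat.cast_choose_div_succ_sub hκ, hsign]; field_simp
  have key := sum_choose_mul_bernoulli_mul_sum_range_pow a (μ + 1)
  simp only [sum_range_succ _ (μ + 1), Nat.choose_self, Nat.sub_self, pow_zero, sum_const,
    card_range, nsmul_one, Nat.cast_one, one_mul] at key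
  rw [sum_congr rfl hterm, ← sum_div, sum_neg_distrib]
  field_simp
  linear_combination -key
end

section
/- Let a₁,…,a_k be positive integers with gcd(a₁,…,a_k)=1, let λ ∈ ℂ with λ ≠ 0 and λ^{a₁} ≠ 1, and let μ be a positive integer. Then s_μ^{(λ)}(a₁,…,a_k) = Σ_{n=0}^{μ} ((−a₁)^n/(λ^{a₁}−1)^{n+1})·C(μ,n)·Σ_{j=0}^{n} ⟨n, n−j⟩ λ^{j a₁} · Σ_{i=0}^{a₁−1} m_i^{μ−n} λ^{m_i} + ((−1)^{μ+1}/(λ−1)^{μ+1})·Σ_{j=0}^{μ} ⟨μ, μ−j⟩ λ^{j}, where the convention 0⁰ = 1 is used (so the i = 0 term m₀^{μ−n} λ^{m₀} equals 1 when n = μ). -/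
open Finset

/-- Eulerian numbers `⟨n,m⟩ = Σ_{k=0}^{m} (−1)^k C(n+1,k)(m−k+1)^n`. -/
def eulerianNum (n m : ℕ) : ℤ :=
  ∑ k ∈ Finset.range (m + 1), (-1 : ℤ) ^ k * ((n + 1).choose k : ℤ) * ((m - k + 1 : ℕ) : ℤ) ^ n

/-!
In the residue class of `i < a 0` the non-representable numbers are `i, i + a 0, …, m i - a 0`.
So for `‖λ‖ < 1` the sum over `NRset a` is `∑ i, (G i - G (m i))`, where
`G x = ∑' t, λ ^ (x + a 0 * t) * (x + a 0 * t) ^ μ`, and `∑ i, G i` is the whole series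
`∑' n, λ ^ n * n ^ μ`. Expanding `(x + a 0 * t) ^ μ` binomially reduces everything to the series
`∑' t, t ^ n * y ^ t = (-1) ^ (n + 1) * eulerianPoly n y / (y - 1) ^ (n + 1)`: the coefficient of
`y ^ s` in `(1 - y) ^ (n + 1) * ∑' t, t ^ n * y ^ t` is an alternating sum of `(s - k) ^ n`, an
`(n + 1)`-st finite difference of a polynomial of degree `n` for `s > n`, hence zero. Both sides of
the identity are holomorphic on the connected set `{λ | λ ^ a 0 ≠ 1}`, so it extends from the disc.
-/

theorem Nat.add_mul_lt_iff_lt_div {a i m t : ℕ} (ha : 0 < a) (hm : m % a = i) :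
    i + a * t < m ↔ t < m / a := by
  conv_lhs => rw [← Nat.mod_add_div m a, hm]
  rw [Nat.add_lt_add_iff_left, Nat.mul_lt_mul_left ha]

section ResidueClasses

variable {a : ℕ} {m : ℕ → ℕ}

theorem setOf_lt_mod_eq_image (ha : 0 < a) (hmod : ∀ i < a, m i % a = i) :
    {n | n < m (n % a)} =
      (fun p : (_ : ℕ) × ℕ => p.1 + a * p.2) '' ↑((range a).sigma fun i => range (m i / a)) := by
  ext n
  simp only [Set.mem_ofPred_eq, Set.mem_image, coe_sigma, Set.mem_sigma_iff, coe_range,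
    Set.mem_Iio, Sigma.exists]
  constructor
  · intro hn
    have hi : n % a < a := Nat.mod_lt n ha
    refine ⟨n % a, n / a, ⟨hi, ?_⟩, Nat.mod_add_div n a⟩
    rwa [← Nat.add_mul_lt_iff_lt_div ha (hmod _ hi), Nat.mod_add_div]
  · rintro ⟨i, t, ⟨hi, ht⟩, rfl⟩
    rwa [Nat.add_mul_mod_self_left, Nat.mod_eq_of_lt hi, Nat.add_mul_lt_iff_lt_div ha (hmod i hi)]

theorem finsum_mem_setOf_lt_mod {M : Type*} [AddCommMonoid M] (ha : 0 < a)
    (hmod : ∀ i < a, m i % a = i) (f : ℕ → M) :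
    ∑ᶠ n ∈ {n | n < m (n % a)}, f n = ∑ i ∈ range a, ∑ t ∈ range (m i / a), f (i + a * t) := by
  rw [setOf_lt_mod_eq_image ha hmod, finsum_mem_image, finsum_mem_coe_finset, sum_sigma]
  rintro ⟨i, t⟩ hit ⟨j, s⟩ hjs h
  simp only [coe_sigma, coe_range, Set.mem_sigma_iff, Set.mem_Iio] at hit hjs h
  have hij : i = j := by
    simpa [Nat.add_mul_mod_self_left, Nat.mod_eq_of_lt hit.1, Nat.mod_eq_of_lt hjs.1] using
      congrArg (· % a) h
  subst hij
  simp_all [ha.ne']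

end ResidueClasses

theorem Representable.add_mul {k : ℕ} {a : Fin k → ℕ} {n : ℕ} (hn : Representable a n)
    (i : Fin k) (t : ℕ) : Representable a (n + t * a i) := by
  obtain ⟨x, rfl⟩ := hn
  refine ⟨x + Pi.single i t, ?_⟩
  simp only [Pi.add_apply, _root_.add_mul, sum_add_distrib, Pi.single_apply, ite_mul, zero_mul,
    sum_ite_eq', mem_univ, if_true]

section Apery

variable {k : ℕ} {a : Fin (k + 1) → ℕ} {m : ℕ → ℕ}

theorem mod_eq_of_isLeast (hm0 : m 0 = 0)
    (hm : ∀ i ∈ Finset.Icc 1 (a 0 - 1),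
      IsLeast {n : ℕ | 0 < n ∧ Representable a n ∧ n % (a 0) = i} (m i))
    {i : ℕ} (hi : i < a 0) : m i % a 0 = i := by
  rcases Nat.eq_zero_or_pos i with rfl | hi0
  · rw [hm0, Nat.zero_mod]
  · exact (hm i (mem_Icc.mpr ⟨hi0, by omega⟩)).1.2.2

theorem representable_iff_le_s11 (ha0 : 0 < a 0) (hm0 : m 0 = 0)
    (hm : ∀ i ∈ Finset.Icc 1 (a 0 - 1),
      IsLeast {n : ℕ | 0 < n ∧ Representable a n ∧ n % (a 0) = i} (m i)) {n : ℕ} (hn : 0 < n) :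
    Representable a n ↔ m (n % a 0) ≤ n := by
  have hi : n % a 0 < a 0 := Nat.mod_lt n ha0
  rcases Nat.eq_zero_or_pos (n % a 0) with h0 | h0
  · rw [h0, hm0]
    refine iff_of_true ?_ (Nat.zero_le n)
    rw [← Nat.div_add_mod n (a 0), h0, add_zero, mul_comm]
    simpa using Representable.add_mul (n := 0) ⟨0, by simp⟩ 0 (n / a 0)
  have hleast := hm _ (mem_Icc.mpr ⟨h0, by omega⟩)
  refine ⟨fun hrep => hleast.2 ⟨hn, hrep, rfl⟩, fun hle => ?_⟩
  obtain ⟨t, ht⟩ : a 0 ∣ n - m (n % a 0) :=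
    Nat.dvd_of_mod_eq_zero (Nat.sub_mod_eq_zero_of_mod_eq hleast.1.2.2.symm)
  rw [← Nat.add_sub_cancel' hle, ht, mul_comm]
  exact hleast.1.2.1.add_mul 0 t

theorem mem_NRset_iff_s11 (ha0 : 0 < a 0) (hm0 : m 0 = 0)
    (hm : ∀ i ∈ Finset.Icc 1 (a 0 - 1),
      IsLeast {n : ℕ | 0 < n ∧ Representable a n ∧ n % (a 0) = i} (m i)) (n : ℕ) :
    n ∈ NRset a ↔ n < m (n % a 0) := by
  rcases Nat.eq_zero_or_pos n with rfl | hn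
  · simp [NRset, hm0]
  · simp [NRset, hn, representable_iff_le_s11 ha0 hm0 hm hn]

end Apery

theorem sum_range_neg_one_pow_mul_choose_mul_sub_pow_eq_zero {R : Type*} [CommRing R]
    {n M : ℕ} (h : n < M) (x : R) :
    ∑ k ∈ range (M + 1), (-1 : R) ^ k * (M.choose k : R) * (x - k) ^ n = 0 := by
  have hΔ := congrFun (fwdDiff_iter_pow_eq_zero_of_lt (R := R) h) (x - M)
  rw [fwdDiff_iter_eq_sum_shift, ← sum_range_reflect, Pi.zero_apply] at hΔ
  rw [← hΔ]
  refine sum_congr rfl fun k hk => ?_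
  have hk : k ≤ M := mem_range_succ_iff.mp hk
  rw [Nat.add_sub_cancel, Nat.sub_sub_self hk, Nat.choose_symm hk, nsmul_one, Nat.cast_sub hk]
  simp only [zsmul_eq_mul, Int.cast_mul, Int.cast_pow, Int.cast_neg, Int.cast_one, Int.cast_natCast]
  ring

theorem sum_range_neg_one_pow_mul_choose_mul_sub_pow_eq_zero_of_lt {n s : ℕ} (h : n < s) :
    ∑ k ∈ range (s + 1), (-1 : ℤ) ^ k * ((n + 1).choose k : ℤ) * ((s - k : ℕ) : ℤ) ^ n = 0 := by
  rw [← sum_range_neg_one_pow_mul_choose_mul_sub_pow_eq_zero (R := ℤ) n.lt_succ_self s, eq_comm]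
  refine sum_subset_zero_on_sdiff (range_subset_range.mpr (by omega)) (fun k hk => ?_)
    (fun k hk => ?_)
  · rw [mem_sdiff, mem_range, mem_range] at hk
    rw [Nat.choose_eq_zero_of_lt (by omega), Nat.cast_zero, mul_zero, zero_mul]
  · rw [Nat.cast_sub (by have := mem_range.mp hk; omega)]

theorem sum_range_neg_one_pow_mul_choose_mul_sub_pow_eq_eulerianNum {n s : ℕ} (h : s ≤ n) :
    ∑ k ∈ range (s + 1), (-1 : ℤ) ^ k * ((n + 1).choose k : ℤ) * ((s - k : ℕ) : ℤ) ^ n =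
      eulerianNum n (n - s) := by
  -- The full alternating sum over `k ≤ n + 1` vanishes; its part with `k > s`, reflected,
  -- is `-eulerianNum n (n - s)`.
  have h0 := sum_range_neg_one_pow_mul_choose_mul_sub_pow_eq_zero (R := ℤ) n.lt_succ_self s
  rw [show n + 1 + 1 = (s + 1) + (n - s + 1) by omega, sum_range_add] at h0
  have hhead : ∑ k ∈ range (s + 1), (-1 : ℤ) ^ k * ((n + 1).choose k : ℤ) * ((s : ℤ) - k) ^ n =
      ∑ k ∈ range (s + 1), (-1 : ℤ) ^ k * ((n + 1).choose k : ℤ) * ((s - k : ℕ) : ℤ) ^ n :=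
    sum_congr rfl fun k hk => by rw [Nat.cast_sub (mem_range_succ_iff.mp hk)]
  have htail : ∑ x ∈ range (n - s + 1), (-1 : ℤ) ^ (s + 1 + x) *
      ((n + 1).choose (s + 1 + x) : ℤ) * ((s : ℤ) - (s + 1 + x : ℕ)) ^ n =
        -eulerianNum n (n - s) := by
    rw [eulerianNum, ← sum_range_reflect, ← sum_neg_distrib]
    refine sum_congr rfl fun x hx => ?_
    obtain ⟨j, rfl⟩ : ∃ j, n = s + x + j := ⟨n - s - x, by have := mem_range.mp hx; omega⟩
    rw [show s + x + j - s + 1 - 1 - x = j by omega, show s + x + j - s - x + 1 = j + 1 by omega,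
      ← Nat.choose_symm (show x ≤ s + x + j + 1 by omega),
      show s + x + j + 1 - x = s + 1 + j by omega,
      show (s : ℤ) - (s + 1 + j : ℕ) = -((j + 1 : ℕ) : ℤ) by push_cast; ring, neg_pow]
    have hsign : (-1 : ℤ) ^ (s + 1 + j) * (-1) ^ (s + x + j) = -(-1) ^ x := by
      rw [← pow_add, show s + 1 + j + (s + x + j) = 2 * (s + j) + x + 1 by omega, pow_succ,
        pow_add, pow_mul, neg_one_sq, one_pow, one_mul, mul_neg_one]
    linear_combination
      ((s + x + j + 1).choose (s + 1 + j) : ℤ) * ((j + 1 : ℕ) : ℤ) ^ (s + x + j) * hsign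
  rw [hhead, htail] at h0
  linarith

def eulerianPoly {R : Type*} [Ring R] (n : ℕ) (z : R) : R :=
  ∑ j ∈ range (n + 1), (eulerianNum n (n - j) : R) * z ^ j

theorem one_sub_pow_mul_tsum_pow_mul_geometric {R : Type*} [NormedCommRing R] [CompleteSpace R]
    {z : R} (hz : ‖z‖ < 1) (n : ℕ) :
    (1 - z) ^ (n + 1) * ∑' t : ℕ, (t : R) ^ n * z ^ t = eulerianPoly n z := by
  set c : ℕ → ℤ := fun s =>
    ∑ k ∈ range (s + 1), (-1 : ℤ) ^ k * ((n + 1).choose k : ℤ) * ((s - k : ℕ) : ℤ) ^ n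
  set b : ℕ → R := fun k => (-1) ^ k * ((n + 1).choose k : R) * z ^ k
  have hb : ∀ k ∉ range (n + 2), b k = 0 := fun k hk => by
    simp [b, Nat.choose_eq_zero_of_lt (show n + 1 < k by simp at hk; omega)]
  have hc : ∀ s ∉ range (n + 1), (c s : R) * z ^ s = 0 := fun s hs => by
    simp [c, sum_range_neg_one_pow_mul_choose_mul_sub_pow_eq_zero_of_lt
      (show n < s by simpa using hs)]
  have hbinom : ∑' k, b k = (1 - z) ^ (n + 1) := by
    rw [tsum_eq_sum hb, sub_eq_neg_add, add_pow]
    refine sum_congr rfl fun k _ => ?_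
    rw [neg_pow, one_pow, mul_one]
    ring
  have hcauchy : ∀ s, ∑ k ∈ range (s + 1), b k * ((s - k : ℕ) ^ n * z ^ (s - k)) =
      (c s : R) * z ^ s := by
    intro s
    simp only [c, b, Int.cast_sum, Int.cast_mul, Int.cast_pow, Int.cast_neg, Int.cast_one,
      Int.cast_natCast, sum_mul]
    refine sum_congr rfl fun k hk => ?_
    rw [← pow_mul_pow_sub z (mem_range_succ_iff.mp hk)]
    ring
  rw [← hbinom, tsum_mul_tsum_eq_tsum_sum_range_of_summable_norm
    (summable_of_ne_finset_zero (s := range (n + 2)) fun k hk => by simp [hb k hk])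
    (summable_norm_pow_mul_geometric_of_norm_lt_one n hz), tsum_congr hcauchy, tsum_eq_sum hc,
    eulerianPoly]
  refine sum_congr rfl fun s hs => ?_
  rw [show c s = eulerianNum n (n - s) from
    sum_range_neg_one_pow_mul_choose_mul_sub_pow_eq_eulerianNum (mem_range_succ_iff.mp hs)]

theorem tsum_pow_mul_geometric_eq {𝕜 : Type*} [NormedField 𝕜] [CompleteSpace 𝕜] {z : 𝕜}
    (hz : ‖z‖ < 1) (n : ℕ) :
    ∑' t : ℕ, (t : 𝕜) ^ n * z ^ t = (-1) ^ (n + 1) / (z - 1) ^ (n + 1) * eulerianPoly n z := by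
  have hz1 : 1 - z ≠ 0 := sub_ne_zero.mpr fun h => by simp [← h] at hz
  rw [← one_sub_pow_mul_tsum_pow_mul_geometric hz, ← neg_sub, neg_pow (1 - z)]
  field_simp

theorem tsum_pow_add_mul_mul_pow_add_mul {𝕜 : Type*} [NormedField 𝕜] [CompleteSpace 𝕜] {z : 𝕜}
    (hz : ‖z‖ < 1) {a : ℕ} (ha : 0 < a) (x μ : ℕ) :
    ∑' t : ℕ, z ^ (x + a * t) * ((x + a * t : ℕ) : 𝕜) ^ μ =
      z ^ x * ∑ n ∈ range (μ + 1), (μ.choose n : 𝕜) * (x : 𝕜) ^ (μ - n) * (a : 𝕜) ^ n *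
        ((-1) ^ (n + 1) / (z ^ a - 1) ^ (n + 1) * eulerianPoly n (z ^ a)) := by
  have hza : ‖z ^ a‖ < 1 := by
    rw [norm_pow]
    exact pow_lt_one₀ (norm_nonneg z) hz ha.ne'
  have hexpand : ∀ t : ℕ, z ^ (x + a * t) * ((x + a * t : ℕ) : 𝕜) ^ μ =
      ∑ n ∈ range (μ + 1), z ^ x * ((μ.choose n : 𝕜) * (x : 𝕜) ^ (μ - n) * (a : 𝕜) ^ n) *
        ((t : 𝕜) ^ n * (z ^ a) ^ t) := by
    intro t
    rw [pow_add, pow_mul, Nat.cast_add, add_comm (x : 𝕜), add_pow, mul_sum]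
    refine sum_congr rfl fun n _ => ?_
    push_cast
    ring
  rw [tsum_congr hexpand, Summable.tsum_finsetSum fun n _ =>
    (summable_pow_mul_geometric_of_norm_lt_one n hza).mul_left _, mul_sum]
  exact sum_congr rfl fun n _ => by rw [tsum_mul_left, tsum_pow_mul_geometric_eq hza, mul_assoc]

theorem Summable.tsum_eq_sum_range_tsum_add_mul {R : Type*} [AddCommGroup R] [UniformSpace R]
    [IsUniformAddGroup R] [CompleteSpace R] [T0Space R] {f : ℕ → R} (hf : Summable f) {a : ℕ}
    (ha : 0 < a) : ∑' n, f n = ∑ i ∈ range a, ∑' t, f (i + a * t) := by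
  obtain ⟨b, rfl⟩ : ∃ b, a = b + 1 := ⟨a - 1, by omega⟩
  rw [Nat.sumByResidueClasses hf (b + 1), Finset.sum_range]
  rfl

noncomputable def powerSumClosedForm (a : ℕ) (m : ℕ → ℕ) (μ : ℕ) (z : ℂ) : ℂ :=
  ∑ n ∈ range (μ + 1), ((-(a : ℂ)) ^ n / (z ^ a - 1) ^ (n + 1)) * (μ.choose n : ℂ) *
      eulerianPoly n (z ^ a) * ∑ i ∈ range a, (m i : ℂ) ^ (μ - n) * z ^ (m i)
    + ((-1 : ℂ) ^ (μ + 1) / (z - 1) ^ (μ + 1)) * eulerianPoly μ z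

theorem sum_range_sum_range_pow_mul_eq_of_norm_lt_one {a : ℕ} (ha : 0 < a) {m : ℕ → ℕ}
    (hmod : ∀ i < a, m i % a = i) (μ : ℕ) {z : ℂ} (hz : ‖z‖ < 1) :
    ∑ i ∈ range a, ∑ t ∈ range (m i / a), z ^ (i + a * t) * ((i + a * t : ℕ) : ℂ) ^ μ =
      powerSumClosedForm a m μ z := by
  set G : ℕ → ℂ := fun x => ∑' t : ℕ, z ^ (x + a * t) * ((x + a * t : ℕ) : ℂ) ^ μ with hG
  have hsumm : Summable fun n : ℕ => z ^ n * (n : ℂ) ^ μ :=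
    (summable_pow_mul_geometric_of_norm_lt_one μ hz).congr fun n => mul_comm _ _
  have hdiff : ∀ i < a, ∑ t ∈ range (m i / a), z ^ (i + a * t) * ((i + a * t : ℕ) : ℂ) ^ μ =
      G i - G (m i) := by
    intro i hi
    have hshift : ∀ t, i + a * (t + m i / a) = m i + a * t := fun t => by
      conv_rhs => rw [← Nat.mod_add_div (m i) a, hmod i hi]
      ring
    have hsummi : Summable fun t : ℕ => z ^ (i + a * t) * ((i + a * t : ℕ) : ℂ) ^ μ :=
      hsumm.comp_injective fun s t h => by simpa [ha.ne'] using h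
    simp only [hG]
    rw [← hsummi.sum_add_tsum_nat_add (m i / a)]
    simp only [hshift, add_sub_cancel_right]
  have hresidues : ∑ i ∈ range a, G i = (-1) ^ (μ + 1) / (z - 1) ^ (μ + 1) * eulerianPoly μ z := by
    rw [← hsumm.tsum_eq_sum_range_tsum_add_mul ha, ← tsum_pow_mul_geometric_eq hz]
    exact tsum_congr fun n => mul_comm _ _
  rw [sum_congr rfl fun i hi => hdiff i (mem_range.mp hi), sum_sub_distrib, hresidues,
    powerSumClosedForm, sub_eq_neg_add]
  congr 1
  simp only [hG, tsum_pow_add_mul_mul_pow_add_mul hz ha, mul_sum]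
  rw [sum_comm, ← sum_neg_distrib]
  refine sum_congr rfl fun n _ => ?_
  rw [← sum_neg_distrib]
  refine sum_congr rfl fun i _ => ?_
  rw [neg_pow]
  ring

theorem eqOn_setOf_pow_ne_one_of_eqOn_ball {f g : ℂ → ℂ} {a : ℕ} (ha : 0 < a)
    (hf : DifferentiableOn ℂ f {z | z ^ a ≠ 1}) (hg : DifferentiableOn ℂ g {z | z ^ a ≠ 1})
    (hfg : Set.EqOn f g (Metric.ball 0 1)) : Set.EqOn f g {z | z ^ a ≠ 1} := by
  have hopen : IsOpen {z : ℂ | z ^ a ≠ 1} := isOpen_ne_fun (continuous_pow a) continuous_const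
  have hconn : IsPreconnected {z : ℂ | z ^ a ≠ 1} := by
    have hfin : {z : ℂ | z ^ a = 1}.Finite :=
      (Polynomial.nthRootsFinset a (1 : ℂ)).finite_toSet.subset fun z hz =>
        (Polynomial.mem_nthRootsFinset ha 1).mpr hz
    exact (hfin.countable.isConnected_compl_of_one_lt_rank
      (by simp [Complex.rank_real_complex])).isPreconnected
  have h0 : (0 : ℂ) ∈ {z : ℂ | z ^ a ≠ 1} := by simp [zero_pow ha.ne']
  exact (hf.analyticOnNhd hopen).eqOn_of_preconnected_of_eventuallyEq (hg.analyticOnNhd hopen)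
    hconn h0 (Filter.eventuallyEq_of_mem (Metric.ball_mem_nhds 0 one_pos) hfg)

theorem differentiableOn_powerSumClosedForm (a : ℕ) (m : ℕ → ℕ) (μ : ℕ) :
    DifferentiableOn ℂ (powerSumClosedForm a m μ) {z | z ^ a ≠ 1} := by
  intro z hz
  have hza : z ^ a - 1 ≠ 0 := sub_ne_zero.mpr hz
  have hz1 : z - 1 ≠ 0 := fun h => hz (by rw [sub_eq_zero.mp h, one_pow])
  apply DifferentiableAt.differentiableWithinAt
  unfold powerSumClosedForm eulerianPoly
  fun_prop (disch := simp [hza, hz1])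

theorem sum_range_sum_range_pow_mul_eq {a : ℕ} (ha : 0 < a) {m : ℕ → ℕ}
    (hmod : ∀ i < a, m i % a = i) (μ : ℕ) {z : ℂ} (hz : z ^ a ≠ 1) :
    ∑ i ∈ range a, ∑ t ∈ range (m i / a), z ^ (i + a * t) * ((i + a * t : ℕ) : ℂ) ^ μ =
      powerSumClosedForm a m μ z := by
  refine eqOn_setOf_pow_ne_one_of_eqOn_ball (f := fun z => ∑ i ∈ range a, ∑ t ∈ range (m i / a),
    z ^ (i + a * t) * ((i + a * t : ℕ) : ℂ) ^ μ) ha (Differentiable.differentiableOn (by fun_prop))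
    (differentiableOn_powerSumClosedForm a m μ) (fun w hw => ?_) hz
  exact sum_range_sum_range_pow_mul_eq_of_norm_lt_one ha hmod μ (mem_ball_zero_iff.mp hw)

theorem stmt11_general {k : ℕ} (a : Fin (k + 1) → ℕ)
    (ha : ∀ i, 0 < a i)
    (m : ℕ → ℕ) (hm0 : m 0 = 0)
    (hm : ∀ i ∈ Finset.Icc 1 (a 0 - 1),
      IsLeast {n : ℕ | 0 < n ∧ Representable a n ∧ n % (a 0) = i} (m i))
    (lam : ℂ) (hla : lam ^ (a 0) ≠ 1)
    (μ : ℕ) :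
    ∑ᶠ n ∈ NRset a, lam ^ n * (n : ℂ) ^ μ =
      ∑ n ∈ Finset.range (μ + 1),
          ((-(a 0 : ℂ)) ^ n / (lam ^ (a 0) - 1) ^ (n + 1)) * (μ.choose n : ℂ) *
            (∑ j ∈ Finset.range (n + 1), (eulerianNum n (n - j) : ℂ) * lam ^ (j * a 0)) *
            (∑ i ∈ Finset.range (a 0), (m i : ℂ) ^ (μ - n) * lam ^ (m i))
        + ((-1 : ℂ) ^ (μ + 1) / (lam - 1) ^ (μ + 1)) *
            ∑ j ∈ Finset.range (μ + 1), (eulerianNum μ (μ - j) : ℂ) * lam ^ j := by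
  have hmod : ∀ i < a 0, m i % a 0 = i := fun i hi => mod_eq_of_isLeast hm0 hm hi
  have hNR : NRset a = {n | n < m (n % a 0)} := Set.ext (mem_NRset_iff_s11 (ha 0) hm0 hm)
  rw [hNR, finsum_mem_setOf_lt_mod (ha 0) hmod, sum_range_sum_range_pow_mul_eq (ha 0) hmod μ hla,
    powerSumClosedForm]
  simp only [eulerianPoly, ← pow_mul, mul_comm _ (a 0)]

/-- Weighted Sylvester power sum formula (Lemma `lem-hh`), `λ^{a₁} ≠ 1`. -/
theorem stmt11 {k : ℕ} (a : Fin (k + 1) → ℕ)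
    (ha : ∀ i, 0 < a i)
    (hgcd : Finset.univ.gcd a = 1)
    (m : ℕ → ℕ) (hm0 : m 0 = 0)
    (hm : ∀ i ∈ Finset.Icc 1 (a 0 - 1),
      IsLeast {n : ℕ | 0 < n ∧ Representable a n ∧ n % (a 0) = i} (m i))
    (lam : ℂ) (hl0 : lam ≠ 0) (hla : lam ^ (a 0) ≠ 1)
    (μ : ℕ) (hμ : 0 < μ) :
    ∑ᶠ n ∈ NRset a, lam ^ n * (n : ℂ) ^ μ =
      ∑ n ∈ Finset.range (μ + 1),
          ((-(a 0 : ℂ)) ^ n / (lam ^ (a 0) - 1) ^ (n + 1)) * (μ.choose n : ℂ) *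
            (∑ j ∈ Finset.range (n + 1), (eulerianNum n (n - j) : ℂ) * lam ^ (j * a 0)) *
            (∑ i ∈ Finset.range (a 0), (m i : ℂ) ^ (μ - n) * lam ^ (m i))
        + ((-1 : ℂ) ^ (μ + 1) / (lam - 1) ^ (μ + 1)) *
            ∑ j ∈ Finset.range (μ + 1), (eulerianNum μ (μ - j) : ℂ) * lam ^ j :=
  stmt11_general a ha m hm0 hm lam hla μ
end

section
/- Let a, d, k be positive integers with gcd(a,d)=1 and 2 ≤ k ≤ a, let λ ∈ ℂ with λ ≠ 0 and λ^{a} = 1, and let μ be a positive integer. Then s_μ^{(λ)}(a, a+d, …, a+(k−1)d) = (1/(μ+1))·Σ_{n=0}^{μ} C(μ+1,n) B_n a^{n−1} Σ_{i=1}^{a−1} ( m_i^{μ+1−n} − i^{μ+1−n} ) λ^{m_i}, where m_i is taken with respect to the sequence a, a+d, …, a+(k−1)d. -/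
open Finset

lemma rep_add_s16 {k : ℕ} {g : Fin k → ℕ} {p q : ℕ} (hp : Representable g p)
    (hq : Representable g q) : Representable g (p + q) := by
  obtain ⟨x, hx⟩ := hp; obtain ⟨y, hy⟩ := hq
  exact ⟨x + y, by simp [hx, hy, add_mul, sum_add_distrib]⟩

lemma rep_mul_a (a d k c : ℕ) (hk : 2 ≤ k) :
    Representable (fun j : Fin k => a + (j : ℕ) * d) (c * a) := by
  refine ⟨fun j => if j = ⟨0, by omega⟩ then c else 0, ?_⟩
  rw [Finset.sum_eq_single (⟨0, by omega⟩ : Fin k)]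
  · simp
  · intro b _ hb; simp [hb]
  · simp


lemma tele_s16 (μ : ℕ) (x : ℚ) : ∀ t : ℕ,
    (Polynomial.bernoulli (μ+1)).eval (x + t) =
      (Polynomial.bernoulli (μ+1)).eval x + ((μ:ℚ)+1) * ∑ j ∈ range t, (x + j)^μ := by
  intro t
  induction t with
  | zero => simp
  | succ t ih =>
    have : x + (↑(t+1) : ℚ) = 1 + (x + t) := by push_cast; ring
    rw [this, Polynomial.bernoulli_eval_one_add, ih, sum_range_succ]
    push_cast
    ring

lemma beval (N : ℕ) (y : ℚ) : (Polynomial.bernoulli N).eval y =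
    ∑ n ∈ range (N+1), bernoulli n * (N.choose n : ℚ) * y^(N-n) := by
  simp [Polynomial.bernoulli, Polynomial.eval_finset_sum]

lemma faul (a i t μ : ℕ) (ha : 0 < a) :
    (∑ j ∈ range t, ((i + j*a : ℕ) : ℚ)^μ) =
      (1/((μ:ℚ)+1)) * ∑ n ∈ range (μ+1), ((μ+1).choose n : ℚ) * bernoulli n *
        (a:ℚ)^((n:ℤ)-1) * (((i + t*a : ℕ):ℚ)^(μ+1-n) - (i:ℚ)^(μ+1-n)) := by
  have haQ : (a:ℚ) ≠ 0 := by positivity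
  have hμ1 : ((μ:ℚ)+1) ≠ 0 := by positivity
  set x : ℚ := (i:ℚ)/a with hx
  have key := tele_s16 μ x t
  have hsum : (∑ j ∈ range t, ((i + j*a : ℕ) : ℚ)^μ) = (a:ℚ)^μ * ∑ j ∈ range t, (x + j)^μ := by
    rw [mul_sum]
    refine sum_congr rfl fun j _ => ?_
    rw [← mul_pow]
    congr 1
    rw [hx]
    push_cast
    field_simp
  rw [hsum]
  have hdiff : ((μ:ℚ)+1) * ∑ j ∈ range t, (x + j)^μ =
      (Polynomial.bernoulli (μ+1)).eval (x + t) - (Polynomial.bernoulli (μ+1)).eval x := by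
    rw [key]; ring
  have expand : (Polynomial.bernoulli (μ+1)).eval (x + t) - (Polynomial.bernoulli (μ+1)).eval x =
      ∑ n ∈ range (μ+1+1), bernoulli n * ((μ+1).choose n : ℚ) * ((x+t)^(μ+1-n) - x^(μ+1-n)) := by
    rw [beval, beval, ← sum_sub_distrib]
    exact sum_congr rfl fun n _ => by ring
  have hmain : (a:ℚ)^μ * (((μ:ℚ)+1) * ∑ j ∈ range t, (x + j)^μ) =
      ∑ n ∈ range (μ+1), ((μ+1).choose n : ℚ) * bernoulli n *
        (a:ℚ)^((n:ℤ)-1) * (((i + t*a : ℕ):ℚ)^(μ+1-n) - (i:ℚ)^(μ+1-n)) := by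
    rw [hdiff, expand, sum_range_succ]
    have hlast : bernoulli (μ+1) * (((μ+1).choose (μ+1)) : ℚ) * ((x+t)^(μ+1-(μ+1)) - x^(μ+1-(μ+1))) = 0 := by
      simp
    rw [hlast, add_zero, mul_sum]
    refine sum_congr rfl fun n hn => ?_
    have hn' : n ≤ μ := by simpa using Nat.lt_succ_iff.mp (mem_range.mp hn)
    have hxt : x + (t:ℚ) = ((i + t*a : ℕ):ℚ) / a := by rw [hx]; push_cast; field_simp
    rw [hxt, hx, div_pow, div_pow]
    have hapow : (a:ℚ)^μ = (a:ℚ)^((n:ℤ)-1) * (a:ℚ)^(μ+1-n) := by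
      rw [← zpow_natCast (a:ℚ) (μ+1-n), ← zpow_add₀ haQ, ← zpow_natCast (a:ℚ) μ]
      congr 1
      omega
    rw [hapow]
    have hane : ((a:ℚ)^(μ+1-n)) ≠ 0 := by positivity
    field_simp
  rw [← hmain]
  field_simp

lemma faulC (a i t μ : ℕ) (ha : 0 < a) :
    (∑ j ∈ range t, ((i + j*a : ℕ) : ℂ)^μ) =
      (1/((μ:ℂ)+1)) * ∑ n ∈ range (μ+1), ((μ+1).choose n : ℂ) * ((bernoulli n : ℚ) : ℂ) *
        (a:ℂ)^((n:ℤ)-1) * (((i + t*a : ℕ):ℂ)^(μ+1-n) - (i:ℂ)^(μ+1-n)) := by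
  have h := congrArg (fun q : ℚ => (q : ℂ)) (faul a i t μ ha)
  push_cast at h
  exact_mod_cast h

/-- Weighted Sylvester power sum for an arithmetic sequence when `λ^a = 1`,
first form. -/
theorem stmt16 (a d k : ℕ) (ha : 0 < a) (hd : 0 < d)
    (hk : 2 ≤ k) (hka : k ≤ a) (hgcd : Nat.gcd a d = 1)
    (m : ℕ → ℕ)
    (hm : ∀ i ∈ Finset.Icc 1 (a - 1),
      IsLeast {n : ℕ | 0 < n ∧
        Representable (fun j : Fin k => a + (j : ℕ) * d) n ∧ n % a = i} (m i))
    (lam : ℂ) (hl0 : lam ≠ 0) (hla : lam ^ a = 1)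
    (μ : ℕ) (hμ : 0 < μ) :
    ∑ᶠ n ∈ NRset (fun j : Fin k => a + (j : ℕ) * d), lam ^ n * (n : ℂ) ^ μ =
      (1 / ((μ : ℂ) + 1)) * ∑ n ∈ Finset.range (μ + 1),
        ((μ + 1).choose n : ℂ) * ((bernoulli n : ℚ) : ℂ) * (a : ℂ) ^ ((n : ℤ) - 1) *
          ∑ i ∈ Finset.Icc 1 (a - 1),
            ((m i : ℂ) ^ (μ + 1 - n) - (i : ℂ) ^ (μ + 1 - n)) * lam ^ (m i) := by
  set g : Fin k → ℕ := fun j : Fin k => a + (j : ℕ) * d with hg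
  have ha2 : 2 ≤ a := le_trans hk hka
  have hmieq : ∀ i ∈ Finset.Icc 1 (a-1), m i = i + (m i / a) * a := by
    intro i hi
    have h1 := (hm i hi).1.2.2
    have h2 := Nat.div_add_mod (m i) a
    have h3 : a * (m i / a) = (m i / a) * a := Nat.mul_comm _ _
    omega
  set N : Finset ℕ := (Finset.Icc 1 (a-1)).biUnion
    (fun i => (range (m i / a)).image (fun j => i + j * a)) with hN
  -- set characterization
  have hset : NRset g = ↑N := by
    ext n
    simp only [NRset, Set.mem_setOf_eq, hN, Finset.coe_biUnion, Finset.mem_coe,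
      Finset.mem_biUnion, Finset.mem_image, Finset.mem_range, Set.mem_iUnion]
    constructor
    · rintro ⟨hn0, hnr⟩
      have hd0 := Nat.div_add_mod n a
      have hd0' : a * (n / a) = (n / a) * a := Nat.mul_comm _ _
      have hmod : n % a ≠ 0 := by
        intro h0
        exact hnr (by
          have : n = (n / a) * a := by omega
          rw [this]; exact rep_mul_a a d k _ hk)
      have hilt : n % a < a := Nat.mod_lt _ (by omega)
      have himem : n % a ∈ Finset.Icc 1 (a-1) := by
        rw [Finset.mem_Icc]; omega
      have hnm : n < m (n % a) := by
        by_contra hge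
        push_neg at hge
        have heq := hmieq _ himem
        set q1 := n / a
        set q2 := m (n % a) / a
        have hq : q2 * a ≤ q1 * a := by omega
        have hq' : q2 ≤ q1 := Nat.le_of_mul_le_mul_right hq (by omega)
        have hsub : (q1 - q2) * a = q1 * a - q2 * a := Nat.sub_mul q1 q2 a
        have hrep : Representable g n := by
          have : n = m (n % a) + (q1 - q2) * a := by omega
          rw [this]
          exact rep_add_s16 (hm _ himem).1.2.1 (rep_mul_a a d k _ hk)
        exact hnr hrep
      refine ⟨n % a, himem, n / a, ?_, by omega⟩
      have heq := hmieq _ himem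
      have h5 : (n / a) * a < (m (n % a) / a) * a := by omega
      exact Nat.lt_of_mul_lt_mul_right h5
    · rintro ⟨i, hi, j, hj, rfl⟩
      rw [Finset.mem_Icc] at hi
      constructor
      · omega
      · intro hrep
        have hmod : (i + j * a) % a = i := by
          rw [Nat.add_mul_mod_self_right, Nat.mod_eq_of_lt (by omega)]
        have hle := (hm i (Finset.mem_Icc.mpr hi)).2 ⟨by omega, hrep, hmod⟩
        have heq := hmieq i (Finset.mem_Icc.mpr hi)
        have h6 : j * a < (m i / a) * a :=
          (Nat.mul_lt_mul_right (show 0 < a by omega)).mpr hj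
        omega
  rw [hset, finsum_mem_coe_finset, hN]
  rw [Finset.sum_biUnion]
  swap
  · -- pairwise disjoint
    intro i hi j hj hij
    simp only [Finset.coe_Icc, Set.mem_Icc] at hi hj
    refine Finset.disjoint_left.mpr ?_
    rintro x hx hx'
    simp only [Finset.mem_image, Finset.mem_range] at hx hx'
    obtain ⟨j1, _, rfl⟩ := hx
    obtain ⟨j2, _, he⟩ := hx'
    have h1 : (i + j1 * a) % a = i := by
      rw [Nat.add_mul_mod_self_right, Nat.mod_eq_of_lt (by omega)]
    have h2 : (j + j2 * a) % a = j := by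
      rw [Nat.add_mul_mod_self_right, Nat.mod_eq_of_lt (by omega)]
    rw [he] at h2
    exact hij (by omega)
  -- rewrite RHS as sum over i
  have hRHS : (1 / ((μ : ℂ) + 1)) * ∑ n ∈ Finset.range (μ + 1),
        ((μ + 1).choose n : ℂ) * ((bernoulli n : ℚ) : ℂ) * (a : ℂ) ^ ((n : ℤ) - 1) *
          ∑ i ∈ Finset.Icc 1 (a - 1),
            ((m i : ℂ) ^ (μ + 1 - n) - (i : ℂ) ^ (μ + 1 - n)) * lam ^ (m i) =
      ∑ i ∈ Finset.Icc 1 (a-1), lam ^ (m i) * ((1 / ((μ : ℂ) + 1)) *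
        ∑ n ∈ Finset.range (μ + 1),
          ((μ + 1).choose n : ℂ) * ((bernoulli n : ℚ) : ℂ) * (a : ℂ) ^ ((n : ℤ) - 1) *
            ((m i : ℂ) ^ (μ + 1 - n) - (i : ℂ) ^ (μ + 1 - n))) := by
    rw [Finset.mul_sum]
    simp_rw [Finset.mul_sum]
    rw [Finset.sum_comm]
    refine Finset.sum_congr rfl fun i _ => ?_
    refine Finset.sum_congr rfl fun n _ => ?_
    ring
  rw [hRHS]
  refine Finset.sum_congr rfl fun i hi => ?_
  rw [Finset.sum_image (fun x _ y _ h =>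
    Nat.eq_of_mul_eq_mul_right (show 0 < a by omega) (by omega))]
  have hlam : ∀ s : ℕ, lam ^ (i + s * a) = lam ^ i := by
    intro s
    rw [pow_add, mul_comm s a, pow_mul, hla, one_pow, mul_one]
  have heq := hmieq i hi
  have hlm : lam ^ (m i) = lam ^ i := by rw [heq, hlam]
  calc ∑ j ∈ range (m i / a), lam ^ (i + j * a) * ((i + j * a : ℕ) : ℂ) ^ μ
      = lam ^ (m i) * ∑ j ∈ range (m i / a), ((i + j * a : ℕ) : ℂ) ^ μ := by
        rw [Finset.mul_sum, hlm]
        exact Finset.sum_congr rfl fun j _ => by rw [hlam]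
    _ = _ := by
        rw [faulC a i (m i / a) μ (by omega)]
        congr 2
        refine Finset.sum_congr rfl fun n _ => ?_
        congr 2
        rw [← heq]
end
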